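/- arXiv:1112.3721 — 7 statements merged into one kernel-verified Lean document; each statement's English description precedes it below -/
import Mathlib

section
/- For a finite simple graph G on vertex set [n] with m edges, the quantity r(G) = (∑_{i ∈ V(G)} 2^{deg(i)}) − n − m satisfies: if G is connected with m ≥ 1 edges, then r(G) ≥ 2m − 1. -/
/-! Since `2 d ≤ 2 ^ d` for every `d`, the handshake lemma gives `∑ 2 ^ deg i ≥ 4 m`, while a
connected graph has at most `m + 1` vertices (it contains a spanning tree). Hence
`∑ 2 ^ deg i - n - m ≥ 4 m - (m + 1) - m = 2 m - 1`. -/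

open Finset

theorem Nat.two_mul_le_two_pow (d : ℕ) : 2 * d ≤ 2 ^ d := by
  induction d with
  | zero => simp
  | succ d ih =>
    rw [pow_succ]
    have : 1 ≤ 2 ^ d := Nat.one_le_two_pow
    omega

namespace SimpleGraph

variable {V : Type*} [Fintype V] (G : SimpleGraph V) [DecidableRel G.Adj]

theorem four_mul_card_edgeFinset_le_sum_two_pow_degree :
    4 * #G.edgeFinset ≤ ∑ v, 2 ^ G.degree v :=
  calc 4 * #G.edgeFinset = ∑ v, 2 * G.degree v := by
        rw [← mul_sum, sum_degrees_eq_twice_card_edges]; ring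
    _ ≤ ∑ v, 2 ^ G.degree v := sum_le_sum fun v _ ↦ Nat.two_mul_le_two_pow _

theorem Connected.card_le_card_edgeFinset_add_one (hconn : G.Connected) :
    Fintype.card V ≤ #G.edgeFinset + 1 := by
  rw [edgeFinset_card, ← Nat.card_eq_fintype_card, ← Nat.card_eq_fintype_card]
  exact hconn.card_vert_le_card_edgeSet_add_one

end SimpleGraph

theorem stmt0_general {V : Type*} [Fintype V] (G : SimpleGraph V)
    [DecidableRel G.Adj] (m : ℕ) (hm : G.edgeFinset.card = m)
    (hconn : G.Connected) :
    (2 * m - 1 : ℤ) ≤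
      (∑ i : V, (2 : ℤ) ^ G.degree i) - Fintype.card V - m := by
  have hsum : (4 * m : ℤ) ≤ ∑ i : V, (2 : ℤ) ^ G.degree i := by
    exact_mod_cast hm ▸ G.four_mul_card_edgeFinset_le_sum_two_pow_degree
  have hcard : (Fintype.card V : ℤ) ≤ m + 1 := by
    exact_mod_cast hm ▸ hconn.card_le_card_edgeFinset_add_one
  linarith

theorem stmt0 {V : Type*} [Fintype V] [DecidableEq V] (G : SimpleGraph V)
    [DecidableRel G.Adj] (m : ℕ) (hm : G.edgeFinset.card = m)
    (hconn : G.Connected) (hm1 : 1 ≤ m) :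
    (2 * m - 1 : ℤ) ≤
      (∑ i : V, (2 : ℤ) ^ G.degree i) - Fintype.card V - m :=
  stmt0_general G m hm hconn
end

section
/- For a finite simple connected graph G with m ≥ 1 edges, the quantity r(G) = ∑_{i ∈ V(G)} (2^{deg(i)} − 1) − m satisfies r(G) ≤ 2^m − 1. -/
open Finset

lemma key_count {V : Type*} [Fintype V] [DecidableEq V] (G : SimpleGraph V)
    [DecidableRel G.Adj] :
    (∑ i : V, (2 ^ G.degree i - 1)) ≤ 2 ^ G.edgeFinset.card - 1 + G.edgeFinset.card := by
  classical
  set E := G.edgeFinset with hE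
  set T := E.powerset.filter (fun S => S.Nonempty) with hT
  have hincE : ∀ i : V, G.incidenceFinset i ⊆ E := by
    intro i e he
    rw [SimpleGraph.mem_incidenceFinset] at he
    rw [hE, SimpleGraph.mem_edgeFinset]
    exact he.1
  have hstep1 : ∀ i : V, 2 ^ G.degree i - 1
      = (T.filter (fun S => S ⊆ G.incidenceFinset i)).card := by
    intro i
    have hfe : T.filter (fun S => S ⊆ G.incidenceFinset i)
        = (G.incidenceFinset i).powerset.filter (fun S => S.Nonempty) := by
      ext S
      simp only [hT, mem_filter, mem_powerset]
      constructor
      · rintro ⟨⟨_, hne⟩, hsub⟩; exact ⟨hsub, hne⟩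
      · rintro ⟨hsub, hne⟩
        exact ⟨⟨hsub.trans (hincE i), hne⟩, hsub⟩
    rw [hfe]
    have h2 : (G.incidenceFinset i).powerset.filter (fun S => S.Nonempty)
        = (G.incidenceFinset i).powerset.erase ∅ := by
      ext S
      simp [Finset.nonempty_iff_ne_empty, and_comm]
    rw [h2, card_erase_of_mem (by simp), card_powerset,
      SimpleGraph.card_incidenceFinset_eq_degree]
  have hswap : (∑ i : V, (2 ^ G.degree i - 1))
      = ∑ S ∈ T, (univ.filter (fun i => S ⊆ G.incidenceFinset i)).card := by
    calc (∑ i : V, (2 ^ G.degree i - 1))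
        = ∑ i : V, (T.filter (fun S => S ⊆ G.incidenceFinset i)).card := by
          simp_rw [hstep1]
      _ = ∑ i : V, ∑ S ∈ T, (if S ⊆ G.incidenceFinset i then 1 else 0) := by
          simp_rw [Finset.card_filter]
      _ = ∑ S ∈ T, ∑ i : V, (if S ⊆ G.incidenceFinset i then 1 else 0) :=
          Finset.sum_comm
      _ = ∑ S ∈ T, (univ.filter (fun i => S ⊆ G.incidenceFinset i)).card := by
          simp_rw [Finset.card_filter]
  rw [hswap]
  have hbound : ∀ S ∈ T,
      (univ.filter (fun i => S ⊆ G.incidenceFinset i)).card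
        ≤ (if S.card = 1 then 2 else 1) := by
    intro S hS
    simp only [hT, mem_filter, mem_powerset] at hS
    obtain ⟨hSE, hSne⟩ := hS
    obtain ⟨e, he⟩ := hSne
    by_cases h1 : S.card = 1
    · simp only [h1, if_true]
      have hsub : (univ.filter (fun i => S ⊆ G.incidenceFinset i))
          ⊆ univ.filter (fun i => i ∈ e) := by
        intro i hi
        simp only [mem_filter, mem_univ, true_and] at hi ⊢
        have h3 := hi he
        rw [SimpleGraph.mem_incidenceFinset] at h3
        exact h3.2
      refine (card_le_card hsub).trans ?_
      induction e with
      | h a b =>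
        have hsub2 : univ.filter (fun i => i ∈ s(a, b)) ⊆ {a, b} := by
          intro i hi
          simp only [mem_filter, Sym2.mem_iff] at hi
          simp [hi.2]
        refine (card_le_card hsub2).trans ?_
        exact (Finset.card_insert_le a {b}).trans (by simp)
    · simp only [h1, if_false]
      have h2 : 2 ≤ S.card := by
        have := Finset.one_le_card.mpr ⟨e, he⟩
        omega
      rw [Finset.card_le_one]
      intro i hi j hj
      simp only [mem_filter, mem_univ, true_and] at hi hj
      by_contra hij
      obtain ⟨e1, h1', e2, h2', hne⟩ := Finset.one_lt_card.mp h2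
      have hi1 := hi h1'
      have hj1 := hj h1'
      have hi2 := hi h2'
      have hj2 := hj h2'
      rw [SimpleGraph.mem_incidenceFinset] at hi1 hj1 hi2 hj2
      have he1 : e1 = s(i, j) :=
        G.incidenceSet_inter_incidenceSet_subset hij ⟨hi1, hj1⟩
      have he2 : e2 = s(i, j) :=
        G.incidenceSet_inter_incidenceSet_subset hij ⟨hi2, hj2⟩
      exact hne (he1.trans he2.symm)
  refine (Finset.sum_le_sum hbound).trans ?_
  have hsplit : ∑ S ∈ T, (if S.card = 1 then 2 else 1)
      = T.card + (T.filter (fun S => S.card = 1)).card := by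
    have hterm : ∀ S ∈ T, (if S.card = 1 then 2 else 1)
        = 1 + (if S.card = 1 then 1 else 0) := by
      intro S _; split <;> rfl
    rw [Finset.sum_congr rfl hterm, Finset.sum_add_distrib, Finset.sum_const,
      smul_eq_mul, mul_one, ← Finset.card_filter]
  have hT1 : T.card = 2 ^ E.card - 1 := by
    have h4 : T = E.powerset.erase ∅ := by
      ext S; simp [hT, Finset.nonempty_iff_ne_empty, and_comm]
    rw [h4, card_erase_of_mem (by simp), card_powerset]
  have hT2 : T.filter (fun S => S.card = 1) = E.powersetCard 1 := by
    ext S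
    simp only [hT, mem_filter, mem_powerset, Finset.mem_powersetCard]
    constructor
    · rintro ⟨⟨h1, _⟩, h2⟩; exact ⟨h1, h2⟩
    · rintro ⟨h1, h2⟩; exact ⟨⟨h1, Finset.card_pos.mp (by omega)⟩, h2⟩
  rw [hsplit, hT1, hT2, Finset.card_powersetCard, Nat.choose_one_right]

theorem stmt1 {V : Type*} [Fintype V] [DecidableEq V] (G : SimpleGraph V)
    [DecidableRel G.Adj] (m : ℕ) (hm : G.edgeFinset.card = m)
    (hconn : G.Connected) (hm1 : 1 ≤ m) :
    (∑ i : V, ((2 : ℤ) ^ G.degree i - 1)) - m ≤ 2 ^ m - 1 := by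
  have key := key_count G
  rw [hm] at key
  have hcast : ((∑ i : V, (2 ^ G.degree i - 1) : ℕ) : ℤ)
      = ∑ i : V, ((2 : ℤ) ^ G.degree i - 1) := by
    push_cast [Nat.cast_sub Nat.one_le_two_pow]
    ring
  have h2 : ((2 ^ m - 1 + m : ℕ) : ℤ) = 2 ^ m - 1 + m := by
    push_cast [Nat.cast_sub Nat.one_le_two_pow]
    ring
  have h3 := (Nat.cast_le (α := ℤ)).mpr key
  rw [hcast, h2] at h3
  linarith
end

section
/- Let G be a finite simple connected graph with m ≥ 1 edges. Then ∑_{i ∈ V(G)} (2^{deg(i)} − 1) − m = 2^m − 1 if and only if G is the star graph on m+1 vertices (one vertex of degree m joined to m vertices of degree 1). -/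
open Finset

private theorem count_eq {V : Type*} [Fintype V] [DecidableEq V] (G : SimpleGraph V)
    [DecidableRel G.Adj] (m : ℕ) (hm : G.edgeFinset.card = m) (hm1 : 1 ≤ m) :
    ((∑ i : V, ((2 : ℤ) ^ G.degree i - 1)) - m = 2 ^ m - 1) ↔
      ∃ v : V, ∀ e ∈ G.edgeFinset, v ∈ e := by
  classical
  set P : V → Finset (Finset (Sym2 V)) :=
    fun v => (G.incidenceFinset v).powerset.erase ∅ with hP
  set A : Finset (Finset (Sym2 V)) := univ.biUnion P with hA
  have hmemP : ∀ (v : V) (S : Finset (Sym2 V)),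
      S ∈ P v ↔ S ⊆ G.incidenceFinset v ∧ S ≠ ∅ := by
    intro v S
    simp [hP, mem_erase, mem_powerset, and_comm]
  have hIe : ∀ (v : V) (e : Sym2 V),
      e ∈ G.incidenceFinset v ↔ e ∈ G.edgeFinset ∧ v ∈ e := by
    intro v e
    rw [SimpleGraph.mem_incidenceFinset, SimpleGraph.mem_edgeFinset]
    exact Iff.rfl
  have hPA : ∀ v, P v ⊆ A := fun v => subset_biUnion_of_mem P (mem_univ v)
  have hPcard : ∀ v, (P v).card = 2 ^ G.degree v - 1 := by
    intro v
    rw [hP]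
    rw [card_erase_of_mem (mem_powerset.mpr (empty_subset _)), card_powerset,
      SimpleGraph.card_incidenceFinset_eq_degree]
  -- double counting
  have hsum : ∑ v : V, (P v).card = ∑ S ∈ A, (univ.filter fun v => S ∈ P v).card := by
    have h1 : ∀ v, (P v).card = ∑ S ∈ A, if S ∈ P v then 1 else 0 := by
      intro v
      rw [← Finset.card_filter]
      congr 1
      ext S
      simp only [mem_filter]
      exact ⟨fun h => ⟨hPA v h, h⟩, fun h => h.2⟩
    simp only [h1]
    rw [Finset.sum_comm]
    refine Finset.sum_congr rfl fun S _ => ?_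
    rw [Finset.card_filter]
  have hfilter : ∀ S ∈ A, (univ.filter fun v => S ∈ P v).card =
      if S.card = 1 then 2 else 1 := by
    intro S hS
    obtain ⟨v₀, -, hv₀⟩ := mem_biUnion.mp hS
    obtain ⟨hSsub, hS0⟩ := (hmemP v₀ S).mp hv₀
    by_cases hc : S.card = 1
    · obtain ⟨e, rfl⟩ := card_eq_one.mp hc
      have he : e ∈ G.incidenceFinset v₀ := hSsub (mem_singleton_self e)
      have heE : e ∈ G.edgeFinset := ((hIe v₀ e).mp he).1
      rw [if_pos hc]
      induction e with
      | _ a b =>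
        have hadj : G.Adj a b := by rwa [SimpleGraph.mem_edgeFinset, SimpleGraph.mem_edgeSet] at heE
        have hfe : (univ.filter fun v => ({s(a,b)} : Finset (Sym2 V)) ∈ P v) = {a, b} := by
          ext v
          simp only [mem_filter, mem_univ, true_and, hmemP, singleton_subset_iff,
            hIe, mem_insert, mem_singleton]
          constructor
          · rintro ⟨⟨-, hv⟩, -⟩
            rwa [Sym2.mem_iff] at hv
          · rintro (rfl | rfl)
            · exact ⟨⟨heE, Sym2.mem_mk_left _ _⟩, singleton_ne_empty _⟩
            · exact ⟨⟨heE, Sym2.mem_mk_right _ _⟩, singleton_ne_empty _⟩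
        rw [hfe, card_pair hadj.ne]
    · rw [if_neg hc]
      have h2 : 1 < S.card := by
        have h0 : S.card ≠ 0 := fun h => hS0 (Finset.card_eq_zero.mp h)
        omega
      obtain ⟨e₁, he₁, e₂, he₂, hne12⟩ := Finset.one_lt_card.mp h2
      have hfe : (univ.filter fun v => S ∈ P v) = {v₀} := by
        ext v
        simp only [mem_filter, mem_univ, true_and, mem_singleton]
        constructor
        · intro hv
          obtain ⟨hsub, -⟩ := (hmemP v S).mp hv
          by_contra hvv
          have h1 : e₁ = s(v, v₀) :=
            (Sym2.mem_and_mem_iff hvv).mp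
              ⟨((hIe v e₁).mp (hsub he₁)).2, ((hIe v₀ e₁).mp (hSsub he₁)).2⟩
          have h2 : e₂ = s(v, v₀) :=
            (Sym2.mem_and_mem_iff hvv).mp
              ⟨((hIe v e₂).mp (hsub he₂)).2, ((hIe v₀ e₂).mp (hSsub he₂)).2⟩
          exact hne12 (h1.trans h2.symm)
        · rintro rfl
          exact hv₀
      rw [hfe, card_singleton]
  have hsingl : (A.filter fun S => S.card = 1).card = m := by
    rw [← hm]
    symm
    refine Finset.card_bij (fun e _ => {e}) ?_ ?_ ?_
    · intro e he
      rw [mem_filter]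
      refine ⟨?_, card_singleton e⟩
      induction e with
      | _ a b =>
        refine mem_biUnion.mpr ⟨a, mem_univ a, (hmemP a _).mpr ⟨?_, singleton_ne_empty _⟩⟩
        rw [singleton_subset_iff, hIe]
        exact ⟨he, Sym2.mem_mk_left _ _⟩
    · intro e₁ _ e₂ _ h
      exact singleton_injective h
    · intro S hS
      rw [mem_filter] at hS
      obtain ⟨hSA, hc⟩ := hS
      obtain ⟨e, rfl⟩ := card_eq_one.mp hc
      obtain ⟨v₀, -, hv₀⟩ := mem_biUnion.mp hSA
      obtain ⟨hsub, -⟩ := (hmemP v₀ _).mp hv₀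
      exact ⟨e, ((hIe v₀ e).mp (hsub (mem_singleton_self e))).1, rfl⟩
  have hmain : ∑ v : V, (2 ^ G.degree v - 1) = A.card + m := by
    calc ∑ v : V, (2 ^ G.degree v - 1) = ∑ v : V, (P v).card := by
          simp only [hPcard]
      _ = ∑ S ∈ A, (univ.filter fun v => S ∈ P v).card := hsum
      _ = ∑ S ∈ A, (1 + if S.card = 1 then 1 else 0) := by
          refine Finset.sum_congr rfl fun S hS => ?_
          rw [hfilter S hS]
          by_cases h : S.card = 1 <;> simp [h]
      _ = A.card + (A.filter fun S => S.card = 1).card := by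
          rw [Finset.sum_add_distrib, ← Finset.card_filter, ← Finset.card_eq_sum_ones]
      _ = A.card + m := by rw [hsingl]
  -- A is contained in the nonempty subsets of the edge set
  have hA_sub : A ⊆ G.edgeFinset.powerset.erase ∅ := by
    intro S hS
    obtain ⟨v₀, -, hv₀⟩ := mem_biUnion.mp hS
    obtain ⟨hsub, hne⟩ := (hmemP v₀ S).mp hv₀
    rw [mem_erase, mem_powerset]
    exact ⟨hne, fun e he => ((hIe v₀ e).mp (hsub he)).1⟩
  have hfull : (G.edgeFinset.powerset.erase ∅).card = 2 ^ m - 1 := by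
    rw [card_erase_of_mem (mem_powerset.mpr (empty_subset _)), card_powerset, hm]
  -- cast to ℤ
  have hcast : (∑ i : V, ((2 : ℤ) ^ G.degree i - 1)) = ((∑ v : V, (2 ^ G.degree v - 1) : ℕ) : ℤ) := by
    rw [Nat.cast_sum]
    refine Finset.sum_congr rfl fun v _ => ?_
    rw [Nat.cast_sub Nat.one_le_two_pow]
    push_cast
    ring
  rw [hcast, hmain]
  have h2m : ((2 : ℤ) ^ m - 1) = ((2 ^ m - 1 : ℕ) : ℤ) := by
    rw [Nat.cast_sub Nat.one_le_two_pow]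
    push_cast
    ring
  rw [h2m]
  push_cast
  constructor
  · intro h
    have hAcard : A.card = 2 ^ m - 1 := by omega
    have hAeq : A = G.edgeFinset.powerset.erase ∅ :=
      Finset.eq_of_subset_of_card_le hA_sub (by rw [hfull, hAcard])
    have hEA : G.edgeFinset ∈ A := by
      rw [hAeq, mem_erase, mem_powerset]
      refine ⟨?_, Finset.Subset.refl _⟩
      intro h0
      rw [h0] at hm
      simp at hm
      omega
    obtain ⟨v₀, -, hv₀⟩ := mem_biUnion.mp hEA
    obtain ⟨hsub, -⟩ := (hmemP v₀ _).mp hv₀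
    exact ⟨v₀, fun e he => ((hIe v₀ e).mp (hsub he)).2⟩
  · rintro ⟨v, hv⟩
    have hAeq : A = G.edgeFinset.powerset.erase ∅ := by
      refine Finset.Subset.antisymm hA_sub fun S hS => ?_
      rw [mem_erase, mem_powerset] at hS
      refine hPA v ((hmemP v S).mpr ⟨fun e he => ?_, hS.1⟩)
      rw [hIe]
      exact ⟨hS.2 he, hv e (hS.2 he)⟩
    rw [hAeq, hfull]
    have : 1 ≤ 2 ^ m := Nat.one_le_two_pow
    push_cast [Nat.cast_sub this]
    ring

private theorem star_of_common {V : Type*} [Fintype V] [DecidableEq V] (G : SimpleGraph V)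
    [DecidableRel G.Adj] (m : ℕ) (hm : G.edgeFinset.card = m)
    (hconn : G.Connected) (hm1 : 1 ≤ m) :
    (∃ v : V, ∀ e ∈ G.edgeFinset, v ∈ e) ↔
      Nonempty (G ≃g completeBipartiteGraph (Fin 1) (Fin m)) := by
  constructor
  · rintro ⟨v, hv⟩
    have hv' : ∀ a b : V, G.Adj a b → v = a ∨ v = b := by
      intro a b hab
      have := hv s(a, b) (by rw [SimpleGraph.mem_edgeFinset, SimpleGraph.mem_edgeSet]; exact hab)
      simpa [Sym2.mem_iff] using this
    have adj_v : ∀ u : V, u ≠ v → G.Adj v u := by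
      intro u hu
      obtain ⟨w⟩ := hconn.preconnected u v
      cases w with
      | nil => exact absurd rfl hu
      | cons h p =>
        rename_i x
        rcases hv' _ _ h with h1 | h2
        · exact absurd h1.symm hu
        · rw [← h2] at h; exact h.symm
    have adj_iff : ∀ a b : V, G.Adj a b ↔ ((a = v ∧ b ≠ v) ∨ (b = v ∧ a ≠ v)) := by
      intro a b
      constructor
      · intro hab
        rcases hv' a b hab with h | h
        · exact Or.inl ⟨h.symm, fun hb => G.ne_of_adj hab (h.symm.trans hb.symm ▸ rfl)⟩
        · exact Or.inr ⟨h.symm, fun ha => G.ne_of_adj hab (by rw [ha, ← h])⟩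
      · rintro (⟨ha, hb⟩ | ⟨hb, ha⟩)
        · subst ha; exact adj_v b hb
        · subst hb; exact (adj_v a ha).symm
    -- edge set is the image of erase v
    have himg : G.edgeFinset = (univ.erase v).image (fun u => s(v, u)) := by
      ext e
      simp only [mem_image, mem_erase, mem_univ, and_true]
      constructor
      · intro he
        induction e with
        | _ a b =>
          have hab : G.Adj a b := by rwa [SimpleGraph.mem_edgeFinset, SimpleGraph.mem_edgeSet] at he
          rcases hv' a b hab with h | h
          · exact ⟨b, fun hb => G.ne_of_adj hab (by rw [← h, hb]), by rw [h]⟩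
          · exact ⟨a, fun ha => G.ne_of_adj hab (by rw [← h, ha]), by rw [h, Sym2.eq_swap]⟩
      · rintro ⟨u, hu, rfl⟩
        rw [SimpleGraph.mem_edgeFinset, SimpleGraph.mem_edgeSet]
        exact adj_v u hu
    have hcard : Fintype.card {u : V // ¬ u = v} = m := by
      have h1 : ((univ : Finset V).erase v).card = m := by
        rw [himg] at hm
        rwa [card_image_of_injOn (fun a _ b _ hab => Sym2.congr_right.mp hab)] at hm
      rw [Fintype.card_subtype]
      rw [← h1]
      congr 1
      ext u
      simp [eq_comm, Ne]
    have e2 : {u : V // ¬ u = v} ≃ Fin m := Fintype.equivFinOfCardEq hcard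
    have e1 : {u : V // u = v} ≃ Fin 1 := Fintype.equivFinOfCardEq (by simp)
    classical
    let f : V ≃ Fin 1 ⊕ Fin m := (Equiv.sumCompl (· = v)).symm.trans (Equiv.sumCongr e1 e2)
    have hf : ∀ a : V, (f a).isLeft = true ↔ a = v := by
      intro a
      by_cases h : a = v
      · subst h; simp [f]
      · simp [f, h]
    refine ⟨⟨f, ?_⟩⟩
    intro a b
    simp only [completeBipartiteGraph_adj]
    rw [adj_iff a b]
    rcases hfa : f a with x | x <;> rcases hfb : f b with y | y <;>
      simp [← hf a, ← hf b, hfa, hfb]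
  · rintro ⟨φ⟩
    refine ⟨φ.symm (Sum.inl 0), ?_⟩
    intro e he
    induction e with
    | _ a b =>
      have hab : G.Adj a b := by rwa [SimpleGraph.mem_edgeFinset, SimpleGraph.mem_edgeSet] at he
      have := φ.map_adj_iff.mpr hab
      simp only [completeBipartiteGraph_adj] at this
      rcases this with ⟨h1, _⟩ | ⟨_, h2⟩
      · rw [Sum.isLeft_iff] at h1
        obtain ⟨x, hx⟩ := h1
        have : a = φ.symm (Sum.inl 0) := by
          rw [← φ.symm_apply_apply a, hx]
          congr
          exact Subsingleton.elim _ _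
        rw [Sym2.mem_iff]; exact Or.inl this.symm
      · rw [Sum.isLeft_iff] at h2
        obtain ⟨x, hx⟩ := h2
        have : b = φ.symm (Sum.inl 0) := by
          rw [← φ.symm_apply_apply b, hx]
          congr
          exact Subsingleton.elim _ _
        rw [Sym2.mem_iff]; exact Or.inr this.symm

theorem stmt3 {V : Type*} [Fintype V] [DecidableEq V] (G : SimpleGraph V)
    [DecidableRel G.Adj] (m : ℕ) (hm : G.edgeFinset.card = m)
    (hconn : G.Connected) (hm1 : 1 ≤ m) :
    (∑ i : V, ((2 : ℤ) ^ G.degree i - 1)) - m = 2 ^ m - 1 ↔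
      Nonempty (G ≃g completeBipartiteGraph (Fin 1) (Fin m)) := by
  rw [count_eq G m hm hm1]
  exact star_of_common G m hm hconn hm1
end

section
/- Let K be a field, S = K[x_{ij} : 1 ≤ i,j ≤ n], and G a simple graph on [n]. Then the ideal P_G = (x_{ii}x_{jj} − x_{ij}x_{ji} : {i,j} ∈ E(G)) is a prime ideal of S; equivalently, S/P_G is an integral domain. -/
open MvPolynomial

/-- The diagonal 2-minor `f_{ij} = x_{ii}x_{jj} - x_{ij}x_{ji}`. -/
noncomputable def diagMinor (K : Type*) [Field K] (n : ℕ) (i j : Fin n) :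
    MvPolynomial (Fin n × Fin n) K :=
  X (i, i) * X (j, j) - X (i, j) * X (j, i)

/-- The ideal `P_G` generated by the diagonal 2-minors of the edges of `G`. -/
noncomputable def diagIdeal (K : Type*) [Field K] (n : ℕ)
    (G : SimpleGraph (Fin n)) : Ideal (MvPolynomial (Fin n × Fin n) K) :=
  Ideal.span {f | ∃ i j : Fin n, G.Adj i j ∧ i < j ∧ f = diagMinor K n i j}

/-!
Adding the edges one at a time, let `{i, j}` with `i < j` be the new edge. The variables
`u = x_{ij}` and `v = x_{ji}` occur in no other generator, so `S = A[u, v]` where `A` is the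
polynomial ring in the remaining variables; the old ideal is extended from a prime `J` of `A`,
and the new one is `J A[u, v] + (c - u v)` with `c = x_{ii} x_{jj} ∉ J` (evaluate at all ones).
Modulo `J` this is the principal ideal `(c - u v)` over the domain `A / J` with `c ≠ 0`, which is
prime: it is the kernel of `u ↦ T`, `v ↦ c T⁻¹` into Laurent polynomials, because every class
modulo `c - u v` has a representative `p(u) + q(v)`, and such a representative maps to zero only
if it is zero.
-/

open scoped LaurentPolynomial

lemma Ideal.map_comap_span_of_subset_range {R S : Type*} [CommRing R] [CommRing S] (f : R →+* S)
    {T : Set S} (hT : T ⊆ Set.range f) : ((Ideal.span T).comap f).map f = Ideal.span T :=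
  le_antisymm Ideal.map_comap_le <| Ideal.span_le.2 fun t ht => by
    obtain ⟨r, rfl⟩ := hT ht
    exact Ideal.mem_map_of_mem _ (Ideal.subset_span ht)

namespace LaurentPolynomial

variable {R : Type*} [CommRing R]

lemma trunc_invert_toLaurent (q : Polynomial R) :
    trunc (invert q.toLaurent) = Polynomial.C (q.coeff 0) := by
  induction q using Polynomial.induction_on' with
  | add p q hp hq => simp only [map_add, hp, hq, Polynomial.coeff_add]
  | monomial k a =>
    rw [← Polynomial.C_mul_X_pow_eq_monomial, Polynomial.toLaurent_C_mul_X_pow, map_mul,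
      invert_C, invert_T, trunc_C_mul_T]
    rcases k with _ | k
    · simp
    · rw [if_neg (by omega), Polynomial.coeff_C_mul_X_pow, if_neg (by omega), map_zero]

lemma toLaurent_add_invert_toLaurent_eq_zero {p q : Polynomial R}
    (h : p.toLaurent + invert q.toLaurent = 0) :
    ∃ a, p = Polynomial.C a ∧ q = Polynomial.C (-a) := by
  have hp : p + Polynomial.C (q.coeff 0) = 0 := by
    simpa [Polynomial.trunc_toLaurent, trunc_invert_toLaurent] using congrArg trunc h
  have hq : q + Polynomial.C (p.coeff 0) = 0 := by
    have h' : q.toLaurent + invert p.toLaurent = 0 := by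
      simpa [add_comm, involutive_invert _] using congrArg invert h
    simpa [Polynomial.trunc_toLaurent, trunc_invert_toLaurent] using congrArg trunc h'
  refine ⟨p.coeff 0, ?_, ?_⟩
  · rw [eq_neg_of_add_eq_zero_left hp]
    simp
  · rw [eq_neg_of_add_eq_zero_left hq, Polynomial.C_neg]

end LaurentPolynomial

section TwoVariables

variable {D : Type*} [CommRing D]

lemma Polynomial.aeval_eq_mul_aeval_divX_add {A : Type*} [CommRing A] [Algebra D A] (x : A)
    (p : Polynomial D) :
    Polynomial.aeval x p = x * Polynomial.aeval x p.divX + algebraMap D A (p.coeff 0) := by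
  conv_lhs => rw [← Polynomial.X_mul_divX_add p]
  simp only [map_add, map_mul, Polynomial.aeval_X, Polynomial.aeval_C]

lemma exists_dvd_sub_aeval_X_zero_add_aeval_X_one (c : D) (f : MvPolynomial (Fin 2) D) :
    ∃ p q : Polynomial D, C c - X 0 * X 1 ∣
      f - (Polynomial.aeval (X 0) p + Polynomial.aeval (X 1) q) := by
  induction f using MvPolynomial.induction_on with
  | C a => exact ⟨Polynomial.C a, 0, by simp⟩
  | add f g hf hg =>
    obtain ⟨p, q, w, hw⟩ := hf
    obtain ⟨p', q', w', hw'⟩ := hg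
    exact ⟨p + p', q + q', w + w', by simp only [map_add]; linear_combination hw + hw'⟩
  | mul_X f s hf =>
    obtain ⟨p, q, w, hw⟩ := hf
    have hp := Polynomial.aeval_eq_mul_aeval_divX_add (X 0 : MvPolynomial (Fin 2) D) p
    have hq := Polynomial.aeval_eq_mul_aeval_divX_add (X 1 : MvPolynomial (Fin 2) D) q
    -- `X 0 * q(X 1) = q(0) X 0 + X 0 X 1 (q.divX)(X 1) ≡ q(0) X 0 + c (q.divX)(X 1)`
    fin_cases s <;> simp only [Fin.zero_eta, Fin.mk_one]
    · refine ⟨p * Polynomial.X + Polynomial.C (q.coeff 0) * Polynomial.X,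
        Polynomial.C c * q.divX, w * X 0 - Polynomial.aeval (X 1) q.divX, ?_⟩
      simp only [map_add, map_mul, Polynomial.aeval_X, Polynomial.aeval_C, algebraMap_eq]
        at hw hq ⊢
      linear_combination X 0 * hw + X 0 * hq
    · refine ⟨Polynomial.C c * p.divX,
        q * Polynomial.X + Polynomial.C (p.coeff 0) * Polynomial.X,
        w * X 1 - Polynomial.aeval (X 0) p.divX, ?_⟩
      simp only [map_add, map_mul, Polynomial.aeval_X, Polynomial.aeval_C, algebraMap_eq]
        at hw hp ⊢
      linear_combination X 1 * hw + X 1 * hp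

noncomputable def laurentEval (c : D) : MvPolynomial (Fin 2) D →ₐ[D] D[T;T⁻¹] :=
  aeval ![LaurentPolynomial.T 1, LaurentPolynomial.C c * LaurentPolynomial.T (-1)]

lemma laurentEval_C_sub_X_mul_X (c : D) : laurentEval c (C c - X 0 * X 1) = 0 := by
  simp only [laurentEval, map_sub, map_mul, aeval_C, aeval_X]
  rw [Matrix.cons_val_zero, Matrix.cons_val_one, Matrix.cons_val_zero, mul_left_comm,
    ← LaurentPolynomial.T_add, add_neg_cancel, LaurentPolynomial.T_zero, mul_one,
    LaurentPolynomial.C_eq_algebraMap, sub_self]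

lemma laurentEval_aeval_X_zero (c : D) (p : Polynomial D) :
    laurentEval c (Polynomial.aeval (X 0) p) = p.toLaurent := by
  conv_rhs => rw [← Polynomial.aeval_X_left_apply p, ← Polynomial.coe_toLaurentAlg,
    ← Polynomial.aeval_algHom_apply]
  rw [← Polynomial.aeval_algHom_apply]
  simp [laurentEval]

lemma laurentEval_aeval_X_one (c : D) (q : Polynomial D) :
    laurentEval c (Polynomial.aeval (X 1) q) =
      LaurentPolynomial.invert (q.comp (Polynomial.C c * Polynomial.X)).toLaurent := by
  rw [← Polynomial.aeval_algHom_apply, Polynomial.comp_eq_aeval, ← Polynomial.coe_toLaurentAlg,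
    ← AlgEquiv.coe_toAlgHom, ← AlgHom.comp_apply, ← Polynomial.aeval_algHom_apply]
  simp [laurentEval]

lemma span_C_sub_X_mul_X_eq_ker_laurentEval [IsDomain D] {c : D} (hc : c ≠ 0) :
    Ideal.span {C c - X 0 * X 1} = RingHom.ker (laurentEval c) := by
  refine le_antisymm (Ideal.span_le.2 (Set.singleton_subset_iff.2 (laurentEval_C_sub_X_mul_X c)))
    fun f hf => ?_
  obtain ⟨p, q, w, hw⟩ := exists_dvd_sub_aeval_X_zero_add_aeval_X_one c f
  suffices Polynomial.aeval (X 0 : MvPolynomial (Fin 2) D) p + Polynomial.aeval (X 1) q = 0 by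
    rw [this, sub_zero] at hw
    exact Ideal.mem_span_singleton.2 ⟨w, hw⟩
  have hzero : p.toLaurent +
      LaurentPolynomial.invert (q.comp (Polynomial.C c * Polynomial.X)).toLaurent = 0 := by
    have := congrArg (laurentEval c) hw
    rwa [map_sub, map_mul, laurentEval_C_sub_X_mul_X, zero_mul, RingHom.mem_ker.1 hf, zero_sub,
      neg_eq_zero, map_add, laurentEval_aeval_X_zero, laurentEval_aeval_X_one] at this
  obtain ⟨a, rfl, hq⟩ := LaurentPolynomial.toLaurent_add_invert_toLaurent_eq_zero hzero
  obtain rfl : q = Polynomial.C (-a) := by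
    rw [← sub_eq_zero,
      ← Polynomial.comp_C_mul_X_eq_zero_iff (mem_nonZeroDivisors_of_ne_zero hc),
      Polynomial.sub_comp, hq, Polynomial.C_comp, sub_self]
  simp

lemma isPrime_span_C_sub_X_mul_X [IsDomain D] {c : D} (hc : c ≠ 0) :
    (Ideal.span {(C c - X 0 * X 1 : MvPolynomial (Fin 2) D)}).IsPrime := by
  rw [span_C_sub_X_mul_X_eq_ker_laurentEval hc]
  exact RingHom.ker_isPrime _

lemma isPrime_map_C_sup_span_C_sub_X_mul_X {J : Ideal D} [J.IsPrime] {c : D} (hc : c ∉ J) :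
    (Ideal.map (C : D →+* MvPolynomial (Fin 2) D) J ⊔
      Ideal.span {C c - X 0 * X 1}).IsPrime := by
  let ψ : MvPolynomial (Fin 2) D →+* MvPolynomial (Fin 2) (D ⧸ J) := map (Ideal.Quotient.mk J)
  have hψ : Function.Surjective ψ := map_surjective _ Ideal.Quotient.mk_surjective
  have hker : RingHom.ker ψ = Ideal.map C J := by rw [ker_map, Ideal.mk_ker]
  have hc' : Ideal.Quotient.mk J c ≠ 0 := by rwa [Ne, Ideal.Quotient.eq_zero_iff_mem]
  have : Ideal.comap ψ (Ideal.span {C (Ideal.Quotient.mk J c) - X 0 * X 1}) =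
      Ideal.map C J ⊔ Ideal.span {C c - X 0 * X 1} := by
    rw [← sup_comm, ← hker, RingHom.ker_eq_comap_bot, ← Ideal.comap_map_of_surjective ψ hψ,
      Ideal.map_span, Set.image_singleton]
    simp [ψ]
  rw [← this]
  exact (isPrime_span_C_sub_X_mul_X hc').comap ψ

lemma isPrime_span_insert_C_sub_X_mul_X {T : Set (MvPolynomial (Fin 2) D)}
    (hT : T ⊆ Set.range (C : D →+* MvPolynomial (Fin 2) D)) [(Ideal.span T).IsPrime] {c : D}
    (hc : C c ∉ Ideal.span T) : (Ideal.span (insert (C c - X 0 * X 1) T)).IsPrime := by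
  rw [Ideal.span_insert, sup_comm, ← Ideal.map_comap_span_of_subset_range C hT]
  exact isPrime_map_C_sup_span_C_sub_X_mul_X hc

end TwoVariables

open scoped Classical in
noncomputable def splitVars (R : Type*) [CommRing R] {σ ι : Type*} (e : ι ↪ σ) :
    MvPolynomial σ R ≃+* MvPolynomial ι (MvPolynomial ↥(Set.range e)ᶜ R) :=
  (renameEquiv R ((Equiv.Set.sumCompl (Set.range e)).symm.trans
    (Equiv.sumCongr (Equiv.ofInjective e e.injective).symm (Equiv.refl _)))).toRingEquiv.trans
    (sumRingEquiv R ι _)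

section splitVars

variable (R : Type*) [CommRing R] {σ ι : Type*} (e : ι ↪ σ)

lemma splitVars_X_apply (k : ι) : splitVars R e (X (e k)) = X k := by
  classical
  simp [splitVars, Equiv.Set.sumCompl_symm_apply_of_mem (Set.mem_range_self k),
    Equiv.ofInjective_symm_apply]

lemma splitVars_X_of_notMem {w : σ} (hw : w ∉ Set.range e) :
    splitVars R e (X w) = C (X ⟨w, hw⟩) := by
  classical
  simp [splitVars, Equiv.Set.sumCompl_symm_apply_of_notMem hw]

lemma splitVars_X_mem_range_C {w : σ} (hw : w ∉ Set.range e) :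
    splitVars R e (X w) ∈ (C : _ →+* MvPolynomial ι _).range :=
  ⟨_, (splitVars_X_of_notMem R e hw).symm⟩

end splitVars

section diagMinor

variable {n : ℕ} {i j : Fin n}

def edgeEmbedding (hij : i ≠ j) : Fin 2 ↪ Fin n × Fin n :=
  ⟨![(i, j), (j, i)], by intro a b; fin_cases a <;> fin_cases b <;> simp [hij, hij.symm]⟩

lemma mem_range_edgeEmbedding (hij : i ≠ j) {w : Fin n × Fin n} :
    w ∈ Set.range (edgeEmbedding hij) ↔ w = (i, j) ∨ w = (j, i) := by
  rw [Set.mem_range, Fin.exists_fin_two, eq_comm, @eq_comm _ (edgeEmbedding hij 1)]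
  rfl

lemma diag_notMem_range_edgeEmbedding (hij : i ≠ j) (a : Fin n) :
    (a, a) ∉ Set.range (edgeEmbedding hij) := by
  rw [mem_range_edgeEmbedding]
  rintro (h | h) <;> obtain ⟨rfl, rfl⟩ := Prod.ext_iff.1 h <;> exact hij rfl

variable (K : Type*) [Field K]

lemma splitVars_diagMinor_mem_range_C (hij : i ≠ j) {a b : Fin n}
    (hab : (a, b) ∉ Set.range (edgeEmbedding hij))
    (hba : (b, a) ∉ Set.range (edgeEmbedding hij)) :
    splitVars K (edgeEmbedding hij) (diagMinor K n a b) ∈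
      (C : _ →+* MvPolynomial (Fin 2) _).range := by
  have hX {w} (hw : w ∉ Set.range (edgeEmbedding hij)) := splitVars_X_mem_range_C K _ hw
  have hdiag := diag_notMem_range_edgeEmbedding hij
  rw [diagMinor, map_sub, map_mul, map_mul]
  exact sub_mem (mul_mem (hX (hdiag a)) (hX (hdiag b))) (mul_mem (hX hab) (hX hba))

lemma exists_splitVars_diagMinor_eq (hij : i ≠ j) :
    ∃ c, splitVars K (edgeEmbedding hij) (X (i, i) * X (j, j)) = C c ∧
      splitVars K (edgeEmbedding hij) (diagMinor K n i j) = C c - X 0 * X 1 := by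
  have hdiag := diag_notMem_range_edgeEmbedding hij
  obtain ⟨c, hc⟩ := mul_mem (splitVars_X_mem_range_C K _ (hdiag i))
    (splitVars_X_mem_range_C K _ (hdiag j))
  rw [← map_mul] at hc
  refine ⟨c, hc.symm, ?_⟩
  rw [diagMinor, map_sub, ← hc, map_mul]
  exact congrArg₂ _ rfl (congrArg₂ _ (splitVars_X_apply K _ 0) (splitVars_X_apply K _ 1))

noncomputable def diagMinorIdeal (s : Set (Fin n × Fin n)) :
    Ideal (MvPolynomial (Fin n × Fin n) K) :=
  Ideal.span ((fun e => diagMinor K n e.1 e.2) '' s)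

lemma X_mul_X_notMem_diagMinorIdeal (s : Set (Fin n × Fin n)) (a b : Fin n) :
    X (a, a) * X (b, b) ∉ diagMinorIdeal K s := by
  have hle : diagMinorIdeal K s ≤ RingHom.ker (eval fun _ => (1 : K)) :=
    Ideal.span_le.2 <| by rintro _ ⟨e, -, rfl⟩; simp [diagMinor]
  exact fun h => by simpa using hle h

lemma isPrime_diagMinorIdeal_insert {s : Set (Fin n × Fin n)} (hs : ∀ e ∈ s, e.1 < e.2)
    (hij : i < j) (hnot : (i, j) ∉ s) [(diagMinorIdeal K s).IsPrime] :
    (diagMinorIdeal K (insert (i, j) s)).IsPrime := by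
  let Φ := splitVars K (edgeEmbedding hij.ne)
  set minor := fun e : Fin n × Fin n => diagMinor K n e.1 e.2
  obtain ⟨c, hc, hminor⟩ := exists_splitVars_diagMinor_eq K hij.ne
  have hT : Φ '' (minor '' s) ⊆ Set.range C := by
    rintro _ ⟨_, ⟨⟨a, b⟩, hab, rfl⟩, rfl⟩
    have hlt : a < b := hs _ hab
    refine splitVars_diagMinor_mem_range_C K hij.ne ?_ ?_ <;>
      rw [mem_range_edgeEmbedding] <;> rintro (h | h) <;> obtain ⟨rfl, rfl⟩ := Prod.ext_iff.1 h
    all_goals first | exact hnot hab | exact lt_asymm hij hlt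
  have hmap : Ideal.span (Φ '' (minor '' s)) = (diagMinorIdeal K s).map Φ :=
    (Ideal.map_span _ _).symm
  have hcmem : C c ∉ Ideal.span (Φ '' (minor '' s)) := by
    rw [hmap, Ideal.mem_map_of_equiv]
    rintro ⟨x, hx, hxc⟩
    rw [Φ.injective (hxc.trans hc.symm)] at hx
    exact X_mul_X_notMem_diagMinorIdeal K s i j hx
  have : (Ideal.span (Φ '' (minor '' s))).IsPrime := by
    rw [hmap]; infer_instance
  have hins : Φ '' (minor '' insert (i, j) s) = insert (C c - X 0 * X 1) (Φ '' (minor '' s)) := by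
    rw [Set.image_insert_eq, Set.image_insert_eq, ← hminor]
  rw [← Ideal.comap_map_of_bijective _ Φ.bijective (I := diagMinorIdeal K _), diagMinorIdeal,
    Ideal.map_span, hins]
  exact (isPrime_span_insert_C_sub_X_mul_X hT hcmem).comap _

end diagMinor

lemma isPrime_diagMinorIdeal (K : Type*) [Field K] {n : ℕ} {s : Set (Fin n × Fin n)}
    (hfin : s.Finite) (hs : ∀ e ∈ s, e.1 < e.2) : (diagMinorIdeal K s).IsPrime := by
  induction s, hfin using Set.Finite.induction_on with
  | empty => simpa [diagMinorIdeal] using Ideal.isPrime_bot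
  | @insert e s he _ ih =>
    have := ih fun e he => hs e (Set.mem_insert_of_mem _ he)
    exact isPrime_diagMinorIdeal_insert K (fun e he => hs e (Set.mem_insert_of_mem _ he))
      (hs e (Set.mem_insert e s)) he

theorem stmt9 (K : Type*) [Field K] (n : ℕ) (G : SimpleGraph (Fin n)) :
    (diagIdeal K n G).IsPrime := by
  have : diagIdeal K n G = diagMinorIdeal K {e | G.Adj e.1 e.2 ∧ e.1 < e.2} := by
    rw [diagIdeal, diagMinorIdeal]
    congr 1
    ext f
    simp [eq_comm, and_assoc]
  rw [this]
  exact isPrime_diagMinorIdeal K (Set.toFinite _) fun e he => he.2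
end

section
/- Let K be a field, S = K[x_{ij} : 1 ≤ i,j ≤ n], and G a simple graph on [n]. With respect to the reverse lexicographic order induced by x_{11} > x_{12} > ⋯ > x_{nn}, the initial monomial of f_{ij} = x_{ii}x_{jj} − x_{ij}x_{ji} (for i < j) is x_{ij}x_{ji}, and the set {f_{ij} : {i,j} ∈ E(G)} is a Gröbner basis of the ideal P_G it generates. -/
/-!
Diagonalizing an exponent `μ` means replacing in `x^μ`, for every edge `ab` of `G`, as many
factors `x_{ab}x_{ba}` as possible by `x_{aa}x_{bb}`. This is unchanged when a factor
`x_{ii}x_{jj}` is exchanged for `x_{ij}x_{ji}` along an edge `ij`, so summing coefficients along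
the fibres of the diagonalization kills `P_G`: every monomial of `f ∈ P_G` shares its
diagonalization with another monomial of `f`. Diagonalizing moves exponent from off-diagonal
variables onto later diagonal ones, so it makes an exponent revlex-smaller unless it fixes it.
Hence an initial monomial of `f ∈ P_G` cannot be fixed by the diagonalization, i.e. it is
divisible by some `x_{ij}x_{ji}` with `ij ∈ E(G)`.
-/

open MvPolynomial

/-- Row-major rank of the variable `x_{ab}`: the variables are ordered
`x_{11} > x_{12} > ⋯ > x_{1n} > x_{21} > ⋯ > x_{nn}`, with smaller rank
meaning larger variable. -/
def varRank (n : ℕ) (p : Fin n × Fin n) : ℕ := (p.1 : ℕ) * n + (p.2 : ℕ)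

/-- `μ` is smaller than `ν` in the reverse lexicographic order induced by the
variable order `x_{11} > x_{12} > ⋯ > x_{nn}`: at the smallest variable
(largest rank) where the exponents differ, `μ` has the larger exponent. -/
def RevLexLt (n : ℕ) (μ ν : (Fin n × Fin n) →₀ ℕ) : Prop :=
  ∃ v : Fin n × Fin n, ν v < μ v ∧
    ∀ w : Fin n × Fin n, varRank n v < varRank n w → μ w = ν w

/-- `μ` is the initial (leading) monomial of `f` with respect to the reverse
lexicographic order. -/
def IsInitialMonomial {K : Type*} [Field K] (n : ℕ)
    (f : MvPolynomial (Fin n × Fin n) K) (μ : (Fin n × Fin n) →₀ ℕ) : Prop :=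
  f ≠ 0 ∧ μ ∈ f.support ∧ ∀ ν ∈ f.support, ν ≠ μ → RevLexLt n ν μ

/-- The initial ideal of `I` with respect to the reverse lexicographic order:
the ideal generated by the initial monomials of the nonzero elements of `I`. -/
noncomputable def initialIdeal (K : Type*) [Field K] (n : ℕ)
    (I : Ideal (MvPolynomial (Fin n × Fin n) K)) :
    Ideal (MvPolynomial (Fin n × Fin n) K) :=
  Ideal.span {g | ∃ f ∈ I, ∃ μ : (Fin n × Fin n) →₀ ℕ,
    IsInitialMonomial n f μ ∧ g = monomial μ (1 : K)}

section BinomialIdeal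

theorem Finsupp.exists_ne_map_eq_of_mapDomain_eq_zero {α β M : Type*} [AddCommMonoid M]
    {N : α → β} {F : α →₀ M} (hF : F.mapDomain N = 0) {μ : α} (hμ : μ ∈ F.support) :
    ∃ ν ∈ F.support, ν ≠ μ ∧ N ν = N μ := by
  by_contra! hcon
  have h0 : F.mapDomain N (N μ) = 0 := by rw [hF, Finsupp.zero_apply]
  rw [Finsupp.mapDomain, Finsupp.sum_apply, Finsupp.sum,
    Finset.sum_eq_single_of_mem μ hμ fun ν hν hne =>
      Finsupp.single_eq_of_ne' (hcon ν hν hne),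
    Finsupp.single_eq_same] at h0
  exact Finsupp.mem_support_iff.mp hμ h0

variable {R σ : Type*} [CommRing R]

theorem mapDomain_coeff_mul_binomial_eq_zero {N : (σ →₀ ℕ) → (σ →₀ ℕ)} {a b : σ →₀ ℕ}
    (hab : ∀ ν, N (ν + a) = N (ν + b)) (q : MvPolynomial σ R) :
    (AddMonoidAlgebra.coeff (q * (monomial a 1 - monomial b 1))).mapDomain N = 0 := by
  induction q using MvPolynomial.induction_on' with
  | monomial u c =>
    rw [mul_sub, monomial_mul, monomial_mul, AddMonoidAlgebra.coeff_sub,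
      ← MvPolynomial.single_eq_monomial, ← MvPolynomial.single_eq_monomial,
      AddMonoidAlgebra.coeff_single, AddMonoidAlgebra.coeff_single,
      Finsupp.mapDomain_sub, Finsupp.mapDomain_single, Finsupp.mapDomain_single, hab,
      sub_self]
  | add p q hp hq =>
    rw [add_mul, AddMonoidAlgebra.coeff_add, Finsupp.mapDomain_add, hp, hq, add_zero]

theorem mapDomain_coeff_eq_zero_of_mem_span_binomial {N : (σ →₀ ℕ) → (σ →₀ ℕ)}
    {B : Set (MvPolynomial σ R)}
    (hB : ∀ g ∈ B, ∃ a b, (∀ ν, N (ν + a) = N (ν + b)) ∧ g = monomial a 1 - monomial b 1)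
    {f : MvPolynomial σ R} (hf : f ∈ Ideal.span B) :
    (AddMonoidAlgebra.coeff f).mapDomain N = 0 := by
  suffices ∀ q : MvPolynomial σ R, (AddMonoidAlgebra.coeff (q * f)).mapDomain N = 0 by
    simpa using this 1
  induction hf using Submodule.span_induction with
  | mem g hg =>
    obtain ⟨a, b, hab, rfl⟩ := hB g hg
    exact mapDomain_coeff_mul_binomial_eq_zero hab
  | zero => simp
  | add x y _ _ hx hy =>
    intro q
    rw [mul_add, AddMonoidAlgebra.coeff_add, Finsupp.mapDomain_add, hx, hy, add_zero]
  | smul c x _ hx =>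
    intro q
    rw [smul_eq_mul, ← mul_assoc]
    exact hx (q * c)

end BinomialIdeal

noncomputable section Diagonalize

variable {n : ℕ} (G : SimpleGraph (Fin n)) [DecidableRel G.Adj]

def exchangeCount (μ : (Fin n × Fin n) →₀ ℕ) (a b : Fin n) : ℕ :=
  if G.Adj a b then min (μ (a, b)) (μ (b, a)) else 0

def diagonalize (μ : (Fin n × Fin n) →₀ ℕ) : (Fin n × Fin n) →₀ ℕ :=
  Finsupp.equivFunOnFinite.symm fun p =>
    if p.1 = p.2 then μ p + ∑ c, exchangeCount G μ p.1 c
    else μ p - exchangeCount G μ p.1 p.2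

abbrev diagExp (i j : Fin n) : (Fin n × Fin n) →₀ ℕ :=
  Finsupp.single (i, i) 1 + Finsupp.single (j, j) 1

abbrev offDiagExp (i j : Fin n) : (Fin n × Fin n) →₀ ℕ :=
  Finsupp.single (i, j) 1 + Finsupp.single (j, i) 1

variable {G}

theorem exchangeCount_symm (μ : (Fin n × Fin n) →₀ ℕ) (a b : Fin n) :
    exchangeCount G μ a b = exchangeCount G μ b a := by
  simp only [exchangeCount, G.adj_comm a b, min_comm]

theorem diagonalize_apply_diag (μ : (Fin n × Fin n) →₀ ℕ) (a : Fin n) :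
    diagonalize G μ (a, a) = μ (a, a) + ∑ c, exchangeCount G μ a c := if_pos rfl

theorem diagonalize_apply_of_ne (μ : (Fin n × Fin n) →₀ ℕ) {a b : Fin n} (hab : a ≠ b) :
    diagonalize G μ (a, b) = μ (a, b) - exchangeCount G μ a b := if_neg hab

theorem exchangeCount_add_of_offDiag_eq_zero {μ ε : (Fin n × Fin n) →₀ ℕ}
    (hε : ∀ a b, a ≠ b → ε (a, b) = 0) (a b : Fin n) :
    exchangeCount G (μ + ε) a b = exchangeCount G μ a b := by
  by_cases hab : a = b
  · subst hab
    simp [exchangeCount]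
  · simp [exchangeCount, hε a b hab, hε b a (Ne.symm hab)]

theorem diagonalize_add_of_offDiag_eq_zero {μ ε : (Fin n × Fin n) →₀ ℕ}
    (hε : ∀ a b, a ≠ b → ε (a, b) = 0) :
    diagonalize G (μ + ε) = diagonalize G μ + ε := by
  ext ⟨a, b⟩
  simp only [Finsupp.add_apply]
  by_cases hab : a = b
  · subst hab
    simp only [diagonalize_apply_diag, Finsupp.add_apply,
      exchangeCount_add_of_offDiag_eq_zero hε]
    ring
  · rw [diagonalize_apply_of_ne _ hab, diagonalize_apply_of_ne _ hab,
      exchangeCount_add_of_offDiag_eq_zero hε, Finsupp.add_apply, hε a b hab, add_zero, add_zero]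

theorem exchangeCount_add_offDiagExp {i j : Fin n} (hij : G.Adj i j)
    (μ : (Fin n × Fin n) →₀ ℕ) (a b : Fin n) :
    exchangeCount G (μ + offDiagExp i j) a b =
      exchangeCount G μ a b + offDiagExp i j (a, b) := by
  unfold exchangeCount
  by_cases hab : G.Adj a b
  · simp only [if_pos hab, Finsupp.add_apply, Finsupp.single_apply, Prod.ext_iff]
    split_ifs <;> omega
  · have : ¬((i = a ∧ j = b) ∨ (j = a ∧ i = b)) := by
      rintro (⟨rfl, rfl⟩ | ⟨rfl, rfl⟩)
      exacts [hab hij, hab hij.symm]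
    simp only [if_neg hab, Finsupp.add_apply, Finsupp.single_apply, Prod.ext_iff]
    split_ifs <;> tauto

theorem sum_offDiagExp_apply (i j a : Fin n) :
    ∑ c, offDiagExp i j (a, c) = diagExp i j (a, a) := by
  simp [Finsupp.single_apply, Prod.ext_iff, Finset.sum_add_distrib, ite_and,
    Finset.sum_ite_irrel]

theorem diagonalize_add_offDiagExp {i j : Fin n} (hij : G.Adj i j) (μ : (Fin n × Fin n) →₀ ℕ) :
    diagonalize G (μ + offDiagExp i j) = diagonalize G μ + diagExp i j := by
  ext ⟨a, b⟩
  by_cases hab : a = b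
  · subst hab
    have : offDiagExp i j (a, a) = 0 := by grind [Finsupp.add_apply, hij.ne]
    rw [Finsupp.add_apply, diagonalize_apply_diag, diagonalize_apply_diag, Finsupp.add_apply, this]
    simp only [exchangeCount_add_offDiagExp hij, Finset.sum_add_distrib, sum_offDiagExp_apply]
    ring
  · have : diagExp i j (a, b) = 0 := by grind [Finsupp.add_apply]
    rw [Finsupp.add_apply, diagonalize_apply_of_ne _ hab, diagonalize_apply_of_ne _ hab,
      exchangeCount_add_offDiagExp hij, Finsupp.add_apply, this]
    omega

theorem diagonalize_add_diagExp_eq_add_offDiagExp {i j : Fin n} (hij : G.Adj i j)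
    (μ : (Fin n × Fin n) →₀ ℕ) :
    diagonalize G (μ + diagExp i j) = diagonalize G (μ + offDiagExp i j) := by
  rw [diagonalize_add_offDiagExp hij, diagonalize_add_of_offDiag_eq_zero]
  intro a b hab
  grind [Finsupp.add_apply]

end Diagonalize

section RevLex

variable {n : ℕ}

theorem varRank_injective : Function.Injective (varRank n) := by
  intro p q h
  apply finProdFinEquiv.injective
  ext
  simp only [finProdFinEquiv_apply_val]
  simp only [varRank] at h
  linarith

theorem varRank_lt_varRank_diag {a b c : Fin n} (ha : a ≤ c) (hb : b ≤ c)
    (hne : (a, b) ≠ (c, c)) :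
    varRank n (a, b) < varRank n (c, c) := by
  simp only [varRank]
  rcases ha.lt_or_eq with ha | rfl
  · have : (a : ℕ) * n + n ≤ c * n := by
      simpa [Nat.succ_mul] using Nat.mul_le_mul_right n (Fin.lt_def.mp ha)
    omega
  · have : b < a := lt_of_le_of_ne hb fun h => hne (h ▸ rfl)
    simpa using this

theorem RevLexLt.asymm {μ ν : (Fin n × Fin n) →₀ ℕ} (h : RevLexLt n μ ν) : ¬RevLexLt n ν μ := by
  rintro ⟨w, hw, hw'⟩
  obtain ⟨v, hv, hv'⟩ := h
  rcases lt_trichotomy (varRank n v) (varRank n w) with hvw | hvw | hvw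
  · exact (hv' w hvw ▸ hw).false
  · exact (varRank_injective hvw ▸ hv).asymm hw
  · exact (hw' v hvw ▸ hv).false

end RevLex

section DiagonalizeRevLex

variable {n : ℕ} {G : SimpleGraph (Fin n)} [DecidableRel G.Adj]

theorem exchangeCount_ne_zero_iff {μ : (Fin n × Fin n) →₀ ℕ} {a b : Fin n} :
    exchangeCount G μ a b ≠ 0 ↔ G.Adj a b ∧ offDiagExp a b ≤ μ := by
  unfold exchangeCount
  by_cases hab : G.Adj a b
  · have hne := hab.ne
    rw [if_pos hab]
    simp only [hab, true_and, Finsupp.le_def, Finsupp.add_apply, Finsupp.single_apply,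
      Prod.forall, Prod.mk.injEq]
    constructor
    · intro h c d
      split_ifs <;> grind
    · intro h
      have h₁ := h a b
      have h₂ := h b a
      simp only [and_self, hne, hne.symm, if_true, if_false] at h₁ h₂
      omega
  · simp [hab]

theorem diagonalize_eq_self {μ : (Fin n × Fin n) →₀ ℕ} (h : ∀ a b, exchangeCount G μ a b = 0) :
    diagonalize G μ = μ := by
  ext ⟨a, b⟩
  by_cases hab : a = b
  · subst hab
    simp [diagonalize_apply_diag, h]
  · simp [diagonalize_apply_of_ne _ hab, h]

theorem lt_diagonalize_apply_diag {ν : (Fin n × Fin n) →₀ ℕ} {a b : Fin n}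
    (h : exchangeCount G ν a b ≠ 0) : ν (a, a) < diagonalize G ν (a, a) := by
  rw [diagonalize_apply_diag]
  have := Finset.single_le_sum (fun c _ => Nat.zero_le (exchangeCount G ν a c))
    (Finset.mem_univ b)
  omega

/-- The discrepancy of highest rank between `ν` and its diagonalization sits on the diagonal,
where diagonalizing only increases exponents: an off-diagonal one at `(a, b)` forces one at
`(c, c)` with `c = max a b`, which has higher rank. -/
theorem revLexLt_diagonalize {ν : (Fin n × Fin n) →₀ ℕ} (h : diagonalize G ν ≠ ν) :
    RevLexLt n (diagonalize G ν) ν := by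
  set μ := diagonalize G ν
  obtain ⟨v, hv, hmax⟩ := Finset.exists_max_image {p | μ p ≠ ν p} (varRank n) (by
    obtain ⟨p, hp⟩ := DFunLike.ne_iff.mp h
    exact ⟨p, by simpa using hp⟩)
  simp only [Finset.mem_filter, Finset.mem_univ, true_and] at hv hmax
  obtain ⟨a, b⟩ := v
  obtain rfl : a = b := by
    by_contra hab
    have hcount : exchangeCount G ν a b ≠ 0 := fun h0 => hv <| by
      rw [diagonalize_apply_of_ne _ hab, h0, Nat.sub_zero]
    have hdiag : ∀ c, a ≤ c → b ≤ c → μ (c, c) = ν (c, c) := fun c hac hbc => by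
      by_contra hc
      exact (hmax (c, c) hc).not_gt <| varRank_lt_varRank_diag hac hbc <| by
        simp only [ne_eq, Prod.mk.injEq]
        grind
    rcases le_total a b with hle | hle
    · exact (lt_diagonalize_apply_diag (exchangeCount_symm (G := G) ν a b ▸ hcount)).ne'
        (hdiag b hle le_rfl)
    · exact (lt_diagonalize_apply_diag hcount).ne' (hdiag a le_rfl hle)
  refine ⟨(a, a), ?_, fun w hw => by_contra fun hne => (hmax w hne).not_gt hw⟩
  rw [diagonalize_apply_diag] at hv ⊢
  omega

end DiagonalizeRevLex

section DiagIdeal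

variable {n : ℕ}

theorem revLexLt_diagExp_offDiagExp {i j : Fin n} (hij : i < j) :
    RevLexLt n (diagExp i j) (offDiagExp i j) := by
  refine ⟨(j, j), by simp [hij.ne'], fun w hw => ?_⟩
  have hw' : ∀ a b, a ≤ j → b ≤ j → (a, b) ≠ w := by
    rintro a b ha hb rfl
    rcases eq_or_ne (a, b) (j, j) with h | h
    · exact hw.ne (congrArg (varRank n) h).symm
    · exact (varRank_lt_varRank_diag ha hb h).asymm hw
  simp [hw' i i hij.le hij.le, hw' j j le_rfl le_rfl, hw' i j hij.le le_rfl,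
    hw' j i le_rfl hij.le]

variable (K : Type*) [Field K]

theorem diagMinor_eq_monomial_sub (i j : Fin n) :
    diagMinor K n i j = monomial (diagExp i j) 1 - monomial (offDiagExp i j) 1 := by
  simp only [diagMinor, X, monomial_mul, one_mul]

theorem isInitialMonomial_diagMinor {i j : Fin n} (hij : i < j) :
    IsInitialMonomial n (diagMinor K n i j) (offDiagExp i j) := by
  have hdo : diagExp i j ≠ offDiagExp i j := fun h => by
    simpa [Finsupp.single_apply, hij.ne, hij.ne'] using DFunLike.congr_fun h (i, i)
  have hcoeff : ∀ ν, coeff ν (diagMinor K n i j) =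
      (if diagExp i j = ν then 1 else 0) - (if offDiagExp i j = ν then 1 else 0) := fun ν => by
    rw [diagMinor_eq_monomial_sub, coeff_sub, coeff_monomial, coeff_monomial]
  have ho : offDiagExp i j ∈ (diagMinor K n i j).support := by
    simp [mem_support_iff, hcoeff, hdo]
  refine ⟨fun h => by simp [h] at ho, ho, fun ν hν hνo => ?_⟩
  obtain rfl : ν = diagExp i j := by
    by_contra h
    simp [mem_support_iff, hcoeff, Ne.symm h, Ne.symm hνo] at hν
  exact revLexLt_diagExp_offDiagExp hij

variable {K} {G : SimpleGraph (Fin n)} [DecidableRel G.Adj]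

theorem mapDomain_diagonalize_eq_zero {f : MvPolynomial (Fin n × Fin n) K}
    (hf : f ∈ diagIdeal K n G) : (AddMonoidAlgebra.coeff f).mapDomain (diagonalize G) = 0 := by
  refine mapDomain_coeff_eq_zero_of_mem_span_binomial ?_ hf
  rintro _ ⟨i, j, hij, -, rfl⟩
  exact ⟨diagExp i j, offDiagExp i j, diagonalize_add_diagExp_eq_add_offDiagExp hij,
    diagMinor_eq_monomial_sub K i j⟩

theorem exists_exchangeCount_ne_zero {f : MvPolynomial (Fin n × Fin n) K}
    (hf : f ∈ diagIdeal K n G) {μ : (Fin n × Fin n) →₀ ℕ} (hμ : IsInitialMonomial n f μ) :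
    ∃ a b, exchangeCount G μ a b ≠ 0 := by
  by_contra! h
  obtain ⟨-, hμf, hmax⟩ := hμ
  obtain ⟨ν, hνf, hνμ, hν⟩ :=
    Finsupp.exists_ne_map_eq_of_mapDomain_eq_zero (mapDomain_diagonalize_eq_zero hf) hμf
  rw [diagonalize_eq_self h] at hν
  exact (hmax ν hνf hνμ).asymm (hν ▸ revLexLt_diagonalize (hν ▸ hνμ.symm))

theorem exists_offDiagExp_le_of_isInitialMonomial {f : MvPolynomial (Fin n × Fin n) K}
    (hf : f ∈ diagIdeal K n G) {μ : (Fin n × Fin n) →₀ ℕ} (hμ : IsInitialMonomial n f μ) :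
    ∃ i j, G.Adj i j ∧ i < j ∧ offDiagExp i j ≤ μ := by
  obtain ⟨a, b, hab⟩ := exists_exchangeCount_ne_zero hf hμ
  obtain ⟨hadj, hle⟩ := exchangeCount_ne_zero_iff.mp hab
  rcases hadj.ne.lt_or_gt with h | h
  · exact ⟨a, b, hadj, h, hle⟩
  · exact ⟨b, a, hadj.symm, h, (add_comm _ _).trans_le hle⟩

end DiagIdeal

/-- The initial monomial of `f_{ij}` (for `i < j`) w.r.t. the reverse
lexicographic order is `x_{ij}x_{ji}`, and the `f_{ij}` over the edges of `G`
form a Gröbner basis of `P_G`: their initial monomials generate the initial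
ideal of `P_G`. -/
theorem stmt10 (K : Type*) [Field K] (n : ℕ) (G : SimpleGraph (Fin n)) :
    (∀ i j : Fin n, i < j →
        IsInitialMonomial n (diagMinor K n i j)
          (Finsupp.single (i, j) 1 + Finsupp.single (j, i) 1)) ∧
      initialIdeal K n (diagIdeal K n G) =
        Ideal.span {g | ∃ i j : Fin n, G.Adj i j ∧ i < j ∧
          g = X (i, j) * X (j, i)} := by
  classical
  have hX : ∀ i j : Fin n, (X (i, j) * X (j, i) : MvPolynomial (Fin n × Fin n) K) =
      monomial (offDiagExp i j) 1 := fun i j => by simp only [X, monomial_mul, one_mul]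
  refine ⟨fun i j => isInitialMonomial_diagMinor K, le_antisymm ?_ ?_⟩
  · rw [initialIdeal, Ideal.span_le]
    rintro _ ⟨f, hf, μ, hμ, rfl⟩
    obtain ⟨i, j, hadj, hij, hle⟩ := exists_offDiagExp_le_of_isInitialMonomial hf hμ
    refine Ideal.mem_of_dvd _ ?_ (Ideal.subset_span ⟨i, j, hadj, hij, rfl⟩)
    rw [hX, monomial_dvd_monomial]
    exact ⟨Or.inr hle, one_dvd _⟩
  · rw [Ideal.span_le]
    rintro _ ⟨i, j, hadj, hij, rfl⟩
    exact Ideal.subset_span ⟨diagMinor K n i j, Ideal.subset_span ⟨i, j, hadj, hij, rfl⟩,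
      offDiagExp i j, isInitialMonomial_diagMinor K hij, hX i j⟩
end

section
/- For a simple graph G on [n] without isolated vertices, the total number of minimal primes of the principal ideal generated by y = ∏_{{i,j} ∈ E(G), i<j} x̄_{ji} in R_G = S/P_G equals ∑_{i ∈ V(G)} 2^{deg(i)} − n. -/
/-!
`P_G` is the kernel of the map into Laurent polynomials sending `x_ab ↦ x_aa x_bb / x_ba` for
every edge `a < b` and fixing all other variables: two monomials with the same image are connected by
exchanges `x_ab x_ba ↔ x_aa x_bb`, each of which changes the monomial by a multiple of a minor.
Composing with the substitution killing a set of variables shows in the same way that for a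
vertex `i` and a set `A` of neighbours of `i` the ideal
`P_{i,A} = (x_ii, x_ik (k ∈ A), x_ki (k ∈ N(i) \ A)) + P_{G \ i}` is prime.

A prime containing `P_G` and `y` contains a factor `x_ba` of `y`, hence `x_aa x_bb`, hence some
`x_ii`, and then some `P_{i,A}`. Conversely `P_{i,A}` contains `P_G`, and it contains `y` unless
`A` is exactly the set of neighbours of `i` above `i`. The `P_{i,A}` are pairwise incomparable,
being told apart by the variables they contain, so the minimal primes of `(y)` are these
`∑ (2 ^ deg i - 1)` ideals.
-/

open MvPolynomial Finset

noncomputable section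

theorem MvPolynomial.ker_mapDomainRingHom_le {σ M K : Type*} [CommRing K] [AddCommMonoid M]
    (g : (σ →₀ ℕ) →+ M) {I : Ideal (MvPolynomial σ K)}
    (hI : ∀ u v, g u = g v → monomial u (1 : K) - monomial v 1 ∈ I) :
    RingHom.ker (AddMonoidAlgebra.mapDomainRingHom K g) ≤ I := by
  intro f hf
  -- Replacing every monomial by a fixed representative of its fibre under `g` changes `f` only
  -- modulo `I`, and factors through `g`, so it sends `f` to `0`.
  set rep := Function.invFun g
  have hsub : ∀ q : MvPolynomial σ K, q - AddMonoidAlgebra.mapDomain (rep ∘ g) q ∈ I := by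
    intro q
    induction q using MvPolynomial.induction_on' with
    | monomial u c =>
      rw [← single_eq_monomial, AddMonoidAlgebra.mapDomain_single, single_eq_monomial,
        Function.comp_apply]
      have := Ideal.mul_mem_left I (C c) (hI u (rep (g u)) (Function.invFun_eq ⟨u, rfl⟩).symm)
      rwa [mul_sub, C_mul_monomial, C_mul_monomial, mul_one] at this
    | add p p' hp hp' =>
      rw [AddMonoidAlgebra.mapDomain_add, add_sub_add_comm]
      exact add_mem hp hp'
  have hzero : AddMonoidAlgebra.mapDomain (rep ∘ g) f = 0 := by
    have hcomp : AddMonoidAlgebra.mapDomain (rep ∘ g) f =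
        AddMonoidAlgebra.mapDomain rep (AddMonoidAlgebra.mapDomainRingHom K g f) := by
      apply AddMonoidAlgebra.coeff_injective
      simp [Finsupp.mapDomain_comp]
    rw [hcomp, hf, AddMonoidAlgebra.mapDomain_zero]
  simpa [hzero] using hsub f

section KillVars

variable {σ K R : Type*} [CommRing K] [CommRing R] (V : Set σ)

def killVars : MvPolynomial σ K →+* MvPolynomial σ K := eval₂Hom C (Vᶜ.indicator X)

variable {V}

lemma killVars_X_of_mem {p : σ} (hp : p ∈ V) : killVars V (X p : MvPolynomial σ K) = 0 := by
  simp [killVars, hp]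

lemma killVars_X_of_notMem {p : σ} (hp : p ∉ V) :
    killVars V (X p : MvPolynomial σ K) = X p := by
  simp [killVars, hp]

lemma sub_killVars_mem_span (f : MvPolynomial σ K) :
    f - killVars V f ∈ Ideal.span (X '' V) := by
  induction f using MvPolynomial.induction_on with
  | C c => simp [killVars]
  | add f g hf hg =>
    rw [map_add, add_sub_add_comm]
    exact add_mem hf hg
  | mul_X f p hf =>
    by_cases hp : p ∈ V
    · rw [map_mul, killVars_X_of_mem hp, mul_zero, sub_zero]
      exact Ideal.mul_mem_left _ _ (Ideal.subset_span ⟨p, hp, rfl⟩)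
    · rw [map_mul, killVars_X_of_notMem hp, ← sub_mul]
      exact Ideal.mul_mem_right _ _ hf

lemma ker_comp_killVars (φ : MvPolynomial σ K →+* R) {S : Set (MvPolynomial σ K)}
    (hS : RingHom.ker φ = Ideal.span S) (hfix : ∀ s ∈ S, killVars V s = s) :
    RingHom.ker (φ.comp (killVars V)) = Ideal.span (X '' V) ⊔ Ideal.span S := by
  refine le_antisymm (fun f hf => ?_) (sup_le ?_ ?_)
  · rw [← sub_add_cancel f (killVars V f)]
    refine add_mem (Ideal.mem_sup_left (sub_killVars_mem_span f)) (Ideal.mem_sup_right ?_)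
    rw [← hS]
    exact hf
  · rw [Ideal.span_le]
    rintro _ ⟨p, hp, rfl⟩
    simp [killVars_X_of_mem hp]
  · rw [Ideal.span_le]
    intro s hs
    have : s ∈ RingHom.ker φ := hS ▸ Ideal.subset_span hs
    simpa [hfix s hs] using this

end KillVars

theorem Ideal.minimalPrimes_eq_image {R ι : Type*} [CommSemiring R] {I : Ideal R}
    (P : ι → Ideal R) {T : Set ι} (hprime : ∀ z ∈ T, (P z).IsPrime)
    (hle : ∀ z ∈ T, I ≤ P z)
    (hcover : ∀ q : Ideal R, q.IsPrime → I ≤ q → ∃ z ∈ T, P z ≤ q)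
    (hinj : ∀ z ∈ T, ∀ w ∈ T, P z ≤ P w → z = w) :
    I.minimalPrimes = P '' T := by
  ext q
  constructor
  · rintro ⟨⟨hq, hIq⟩, hmin⟩
    obtain ⟨z, hz, hzq⟩ := hcover q hq hIq
    exact ⟨z, hz, le_antisymm hzq (hmin ⟨hprime z hz, hle z hz⟩ hzq)⟩
  · rintro ⟨z, hz, rfl⟩
    refine ⟨⟨hprime z hz, hle z hz⟩, fun r ⟨hr, hIr⟩ hrz => ?_⟩
    obtain ⟨w, hw, hwr⟩ := hcover r hr hIr
    rwa [hinj w hw z hz (hwr.trans hrz)] at hwr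

theorem Ideal.ncard_minimalPrimes_span_singleton_mk {R : Type*} [CommRing R] (J : Ideal R)
    (y : R) : (Ideal.span {Ideal.Quotient.mk J y}).minimalPrimes.ncard =
      (J ⊔ Ideal.span {y}).minimalPrimes.ncard := by
  have hcomap : (Ideal.span {Ideal.Quotient.mk J y}).comap (Ideal.Quotient.mk J) =
      J ⊔ Ideal.span {y} := by
    rw [← Set.image_singleton, ← Ideal.map_span,
      Ideal.comap_map_of_surjective _ Ideal.Quotient.mk_surjective, ← RingHom.ker_eq_comap_bot,
      Ideal.mk_ker, sup_comm]
  rw [← hcomap, Ideal.comap_minimalPrimes_eq_of_surjective Ideal.Quotient.mk_surjective,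
    Set.ncard_image_of_injective _
      (Ideal.comap_injective_of_surjective _ Ideal.Quotient.mk_surjective)]

variable {K : Type*} [Field K] {n : ℕ}

def minorIdeal (K : Type*) [Field K] (E : Finset (Fin n × Fin n)) :
    Ideal (MvPolynomial (Fin n × Fin n) K) :=
  Ideal.span ((fun p : Fin n × Fin n => diagMinor K n p.1 p.2) '' E)

def edgeDefect (p : Fin n × Fin n) : Fin n × Fin n →₀ ℤ :=
  Finsupp.single (p.1, p.1) 1 + Finsupp.single (p.2, p.2) 1 - Finsupp.single p 1 -
    Finsupp.single p.swap 1

/-- The exponent of the image of `X ^ u` under the monomial map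
`X (a, b) ↦ X (a, a) * X (b, b) / X (b, a)` for `(a, b) ∈ E`, fixing all other variables. -/
def toricExponent (E : Finset (Fin n × Fin n)) :
    (Fin n × Fin n →₀ ℕ) →+ (Fin n × Fin n →₀ ℤ) :=
  Finsupp.mapRange.addMonoidHom (Nat.castAddMonoidHom ℤ) +
    ∑ p ∈ E, (multiplesHom _ (edgeDefect p)).comp (Finsupp.applyAddHom p)

def toricMap (K : Type*) [Field K] (E : Finset (Fin n × Fin n)) :
    MvPolynomial (Fin n × Fin n) K →+* AddMonoidAlgebra K (Fin n × Fin n →₀ ℤ) :=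
  AddMonoidAlgebra.mapDomainRingHom K (toricExponent E)

section Toric

variable {E : Finset (Fin n × Fin n)}

lemma toricExponent_apply (u : Fin n × Fin n →₀ ℕ) :
    toricExponent E u = u.mapRange (↑) Nat.cast_zero + ∑ p ∈ E, u p • edgeDefect p := by
  simp [toricExponent]

lemma toricExponent_single (q : Fin n × Fin n) :
    toricExponent E (Finsupp.single q 1) =
      Finsupp.single q 1 + if q ∈ E then edgeDefect q else 0 := by
  simp [toricExponent_apply, Finsupp.single_apply]

lemma eq_of_toricExponent_eq {u v : Fin n × Fin n →₀ ℕ}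
    (h : toricExponent E u = toricExponent E v) (hagree : ∀ p ∈ E, u p = v p) : u = v := by
  rw [toricExponent_apply, toricExponent_apply,
    Finset.sum_congr rfl fun p hp => by rw [hagree p hp], add_left_inj] at h
  exact Finsupp.mapRange_injective _ _ Nat.cast_injective h

lemma toricMap_monomial (u : Fin n × Fin n →₀ ℕ) (c : K) :
    toricMap K E (monomial u c) = AddMonoidAlgebra.single (toricExponent E u) c :=
  AddMonoidAlgebra.mapDomain_single

lemma toricMap_X_ne_zero (p : Fin n × Fin n) : toricMap K E (X p) ≠ 0 := by
  rw [X, toricMap_monomial]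
  exact AddMonoidAlgebra.single_ne_zero.2 one_ne_zero

variable (hE : ∀ p ∈ E, p.1 < p.2)
include hE

lemma diag_notMem (a : Fin n) : (a, a) ∉ E := fun h => lt_irrefl a (hE _ h)

lemma swap_notMem {a b : Fin n} (hab : (a, b) ∈ E) : (b, a) ∉ E :=
  fun h => lt_asymm (hE _ hab) (hE _ h)

lemma toricExponent_exchange {a b : Fin n} (hab : (a, b) ∈ E) :
    toricExponent E (Finsupp.single (a, a) 1 + Finsupp.single (b, b) 1) =
      toricExponent E (Finsupp.single (a, b) 1 + Finsupp.single (b, a) 1) := by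
  simp only [map_add, toricExponent_single, if_pos hab, if_neg (diag_notMem hE _),
    if_neg (swap_notMem hE hab), edgeDefect, Prod.swap_prod_mk]
  abel

lemma toricExponent_apply_swap {a b : Fin n} (hab : (a, b) ∈ E) (u : Fin n × Fin n →₀ ℕ) :
    toricExponent E u (b, a) = u (b, a) - u (a, b) := by
  have hlt : a < b := hE _ hab
  rw [toricExponent_apply, Finsupp.add_apply, Finsupp.finsetSum_apply,
    Finset.sum_eq_single (a, b)]
  · simp [edgeDefect, hlt.ne, hlt.ne']
    ring
  · rintro ⟨c, d⟩ hcd hne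
    have hlt' : c < d := hE _ hcd
    simp only [edgeDefect, Finsupp.smul_apply, Finsupp.sub_apply, Finsupp.add_apply,
      Finsupp.single_apply, Prod.swap, Prod.mk.injEq]
    rw [if_neg (by grind), if_neg (by grind), if_neg (by grind), if_neg (by grind)]
    simp
  · exact fun h => absurd hab h

lemma exists_exchange {a b : Fin n} (hab : (a, b) ∈ E) {u : Fin n × Fin n →₀ ℕ}
    (hu : 0 < u (a, b)) (hu' : 0 < u (b, a)) :
    ∃ u', toricExponent E u' = toricExponent E u ∧ ∑ q ∈ E, u' q + 1 = ∑ q ∈ E, u q ∧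
      monomial u (1 : K) - monomial u' 1 ∈ minorIdeal K E := by
  have hne : (a, b) ≠ (b, a) := fun h => (hE _ hab).ne (Prod.ext_iff.1 h).1
  obtain ⟨w, rfl⟩ : ∃ w, u = Finsupp.single (a, b) 1 + Finsupp.single (b, a) 1 + w := by
    refine exists_add_of_le (Finsupp.le_def.2 fun q => ?_)
    by_cases hq : q = (a, b)
    · subst hq; simp [hne]; exact hu
    · by_cases hq' : q = (b, a)
      · subst hq'; simp [hne.symm]; exact hu'
      · simp [Ne.symm hq, Ne.symm hq']
  refine ⟨Finsupp.single (a, a) 1 + Finsupp.single (b, b) 1 + w, ?_, ?_, ?_⟩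
  · rw [map_add _ _ w, map_add _ _ w, toricExponent_exchange hE hab]
  · simp [Finset.sum_add_distrib, Finsupp.single_apply, hab, diag_notMem hE,
      swap_notMem hE hab]
    ring
  · have : monomial (Finsupp.single (a, b) 1 + Finsupp.single (b, a) 1 + w) (1 : K) -
        monomial (Finsupp.single (a, a) 1 + Finsupp.single (b, b) 1 + w) 1 =
        -(monomial w 1 * diagMinor K n a b) := by
      simp only [diagMinor, X, monomial_mul, mul_one, mul_sub, neg_sub, add_comm w]
    rw [this]
    exact neg_mem (Ideal.mul_mem_left _ _ (Ideal.subset_span ⟨(a, b), hab, rfl⟩))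

lemma monomial_sub_monomial_mem_minorIdeal {u v : Fin n × Fin n →₀ ℕ}
    (h : toricExponent E u = toricExponent E v) :
    monomial u (1 : K) - monomial v 1 ∈ minorIdeal K E := by
  induction hN : ∑ q ∈ E, u q + ∑ q ∈ E, v q using Nat.strong_induction_on
    generalizing u v with
  | _ N ih =>
  by_cases hagree : ∀ q ∈ E, u q = v q
  · rw [eq_of_toricExponent_eq h hagree, sub_self]
    exact zero_mem _
  push Not at hagree
  obtain ⟨⟨a, b⟩, hab, hne⟩ := hagree
  wlog hlt : v (a, b) < u (a, b) generalizing u v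
  · rw [← neg_sub]
    exact neg_mem (this h.symm (by omega) hne.symm (by omega))
  have hswap : 0 < u (b, a) := by
    have := congrArg (· (b, a)) h
    simp only [toricExponent_apply_swap hE hab] at this
    omega
  obtain ⟨u', hu', hsum, hmem⟩ := exists_exchange (K := K) hE hab (by omega) hswap
  rw [← sub_add_sub_cancel _ (monomial u' 1)]
  exact add_mem hmem (ih _ (by omega) (hu'.trans h) rfl)

lemma ker_toricMap : RingHom.ker (toricMap K E) = minorIdeal K E := by
  refine le_antisymm (ker_mapDomainRingHom_le _ fun u v h =>
    monomial_sub_monomial_mem_minorIdeal hE h) ?_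
  rw [minorIdeal, Ideal.span_le]
  rintro _ ⟨⟨a, b⟩, hab, rfl⟩
  simp only [SetLike.mem_coe, RingHom.mem_ker, diagMinor, X, monomial_mul, mul_one, map_sub,
    toricMap_monomial, toricExponent_exchange hE hab, sub_self]

end Toric

lemma diagMinor_mem_iff_left {I : Ideal (MvPolynomial (Fin n × Fin n) K)} {i k : Fin n}
    (hi : X (i, i) ∈ I) : diagMinor K n i k ∈ I ↔ X (i, k) * X (k, i) ∈ I :=
  Submodule.sub_mem_iff_right _ (Ideal.mul_mem_right _ _ hi)

lemma diagMinor_mem_iff_right {I : Ideal (MvPolynomial (Fin n × Fin n) K)} {i k : Fin n}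
    (hi : X (i, i) ∈ I) : diagMinor K n k i ∈ I ↔ X (i, k) * X (k, i) ∈ I := by
  rw [diagMinor, Submodule.sub_mem_iff_right _ (Ideal.mul_mem_left _ _ hi), mul_comm]

section Graph

variable (G : SimpleGraph (Fin n))

def vertexVars (i : Fin n) (A : Finset (Fin n)) : Set (Fin n × Fin n) :=
  {p | p = (i, i) ∨ (p.1 = i ∧ p.2 ∈ A) ∨ (p.2 = i ∧ G.Adj i p.1 ∧ p.1 ∉ A)}

variable {G} in
lemma fst_or_snd_eq_of_mem_vertexVars {i : Fin n} {A : Finset (Fin n)} {p : Fin n × Fin n}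
    (hp : p ∈ vertexVars G i A) : p.1 = i ∨ p.2 = i := by
  rcases hp with rfl | ⟨h, -⟩ | ⟨h, -⟩
  exacts [Or.inl rfl, Or.inl h, Or.inr h]

variable {G} in
lemma eq_of_vertexVars_subset [DecidableRel G.Adj] {i j : Fin n} {A B : Finset (Fin n)}
    (hA : A ⊆ G.neighborFinset i) (hB : B ⊆ G.neighborFinset j)
    (h : vertexVars G i A ⊆ vertexVars G j B) : i = j ∧ A = B := by
  obtain rfl : i = j := (fst_or_snd_eq_of_mem_vertexVars (h (Or.inl rfl))).elim id id
  refine ⟨rfl, Finset.ext fun k => ⟨fun hk => ?_, fun hk => ?_⟩⟩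
  · have hki : k ≠ i := (G.ne_of_adj ((G.mem_neighborFinset _ _).1 (hA hk))).symm
    rcases h (a := (i, k)) (Or.inr (Or.inl ⟨rfl, hk⟩)) with h' | ⟨-, h'⟩ | ⟨h', -⟩
    exacts [absurd (Prod.ext_iff.1 h').2 hki, h', absurd h' hki]
  · by_contra hkA
    have hadj := (G.mem_neighborFinset _ _).1 (hB hk)
    rcases h (a := (k, i)) (Or.inr (Or.inr ⟨rfl, hadj, hkA⟩)) with
      h' | ⟨h', -⟩ | ⟨-, -, h'⟩
    exacts [G.ne_of_adj hadj (Prod.ext_iff.1 h').1.symm, G.ne_of_adj hadj h'.symm, h' hk]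

variable [DecidableRel G.Adj]

def edgePairs : Finset (Fin n × Fin n) :=
  univ.filter fun p => G.Adj p.1 p.2 ∧ p.1 < p.2

def edgeProduct (K : Type*) [Field K] : MvPolynomial (Fin n × Fin n) K :=
  ∏ p ∈ edgePairs G, X (p.2, p.1)

def vertexPrime (K : Type*) [Field K] (i : Fin n) (A : Finset (Fin n)) :
    Ideal (MvPolynomial (Fin n × Fin n) K) :=
  Ideal.span (X '' vertexVars G i A) ⊔
    minorIdeal K ((edgePairs G).filter fun p => p.1 ≠ i ∧ p.2 ≠ i)

def upperNeighbors (i : Fin n) : Finset (Fin n) :=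
  (G.neighborFinset i).filter (i < ·)

def vertexIndex : Finset (Σ _ : Fin n, Finset (Fin n)) :=
  univ.sigma fun i => (G.neighborFinset i).powerset.erase (upperNeighbors G i)

open scoped Classical in
/-- For each neighbour `k` of `i`, a prime containing `X (i, i)` and `P_G` contains `X (i, k)`
or `X (k, i)`; when it contains both, the rule puts the factor of `edgeProduct` into
`vertexVars`. -/
def chosenNeighbors (p : Ideal (MvPolynomial (Fin n × Fin n) K)) (i : Fin n) : Finset (Fin n) :=
  (G.neighborFinset i).filter fun k => if i < k then X (k, i) ∉ p else X (i, k) ∈ p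

variable {G}

lemma diagIdeal_eq_minorIdeal : diagIdeal K n G = minorIdeal K (edgePairs G) := by
  rw [diagIdeal, minorIdeal]
  congr 1
  ext f
  simp [edgePairs, eq_comm, and_assoc]

lemma vertexPrime_eq_ker (i : Fin n) (A : Finset (Fin n)) :
    vertexPrime G K i A = RingHom.ker ((toricMap K ((edgePairs G).filter
      fun p => p.1 ≠ i ∧ p.2 ≠ i)).comp (killVars (vertexVars G i A))) := by
  have hlt : ∀ p ∈ (edgePairs G).filter fun p => p.1 ≠ i ∧ p.2 ≠ i, p.1 < p.2 :=
    fun p hp => (mem_filter.1 (mem_filter.1 hp).1).2.2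
  have hfix : ∀ a b : Fin n, a ≠ i → b ≠ i → (a, b) ∉ vertexVars G i A :=
    fun a b ha hb h => (fst_or_snd_eq_of_mem_vertexVars h).elim ha hb
  rw [ker_comp_killVars _ (ker_toricMap hlt), vertexPrime, minorIdeal]
  rintro _ ⟨⟨a, b⟩, hab, rfl⟩
  obtain ⟨-, ha, hb⟩ := mem_filter.1 hab
  simp [diagMinor, killVars_X_of_notMem, hfix, ha, hb]

lemma vertexPrime_isPrime (i : Fin n) (A : Finset (Fin n)) : (vertexPrime G K i A).IsPrime := by
  rw [vertexPrime_eq_ker]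
  exact RingHom.ker_isPrime _

lemma X_mem_vertexPrime_iff {i : Fin n} {A : Finset (Fin n)} {p : Fin n × Fin n} :
    (X p : MvPolynomial (Fin n × Fin n) K) ∈ vertexPrime G K i A ↔ p ∈ vertexVars G i A := by
  refine ⟨fun h => ?_, fun h => Ideal.mem_sup_left (Ideal.subset_span ⟨p, h, rfl⟩)⟩
  by_contra hp
  rw [vertexPrime_eq_ker, RingHom.mem_ker, RingHom.comp_apply, killVars_X_of_notMem hp] at h
  exact toricMap_X_ne_zero p h

lemma exists_of_ne_upperNeighbors {i : Fin n} {A : Finset (Fin n)}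
    (hA : A ⊆ G.neighborFinset i) (h : A ≠ upperNeighbors G i) :
    ∃ k, G.Adj i k ∧ (k < i ∧ k ∈ A ∨ i < k ∧ k ∉ A) := by
  by_contra! hk
  refine h (Finset.ext fun k => ⟨fun hkA => ?_, fun hk' => ?_⟩)
  · have hik := (G.mem_neighborFinset i k).1 (hA hkA)
    exact mem_filter.2
      ⟨hA hkA, (lt_or_gt_of_ne hik.ne').resolve_left fun hlt => (hk k hik).1 hlt hkA⟩
  · obtain ⟨hkN, hlt⟩ := mem_filter.1 hk'
    exact (hk k ((G.mem_neighborFinset i k).1 hkN)).2 hlt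

lemma diagIdeal_sup_le_vertexPrime {i : Fin n} {A : Finset (Fin n)}
    (hA : A ⊆ G.neighborFinset i) (hgood : A ≠ upperNeighbors G i) :
    diagIdeal K n G ⊔ Ideal.span {edgeProduct G K} ≤ vertexPrime G K i A := by
  have hii : X (i, i) ∈ vertexPrime G K i A := X_mem_vertexPrime_iff.2 (Or.inl rfl)
  have hprod : ∀ k, G.Adj i k → X (i, k) * X (k, i) ∈ vertexPrime G K i A := fun k hk => by
    by_cases hkA : k ∈ A
    · exact Ideal.mul_mem_right _ _ (X_mem_vertexPrime_iff.2 (Or.inr (Or.inl ⟨rfl, hkA⟩)))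
    · exact Ideal.mul_mem_left _ _ (X_mem_vertexPrime_iff.2 (Or.inr (Or.inr ⟨rfl, hk, hkA⟩)))
  refine sup_le ?_ ?_
  · rw [diagIdeal_eq_minorIdeal, minorIdeal, Ideal.span_le]
    rintro _ ⟨⟨a, b⟩, hab, rfl⟩
    obtain ⟨-, hadj, -⟩ := mem_filter.1 hab
    by_cases ha : a = i
    · subst ha; exact (diagMinor_mem_iff_left hii).2 (hprod b hadj)
    by_cases hb : b = i
    · subst hb; exact (diagMinor_mem_iff_right hii).2 (hprod a hadj.symm)
    exact Ideal.mem_sup_right (Ideal.subset_span ⟨(a, b), mem_filter.2 ⟨hab, ha, hb⟩, rfl⟩)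
  · rw [Ideal.span_singleton_le_iff_mem]
    obtain ⟨k, hik, ⟨hlt, hkA⟩ | ⟨hlt, hkA⟩⟩ := exists_of_ne_upperNeighbors hA hgood
    · refine Ideal.mem_of_dvd _ (dvd_prod_of_mem _ (s := edgePairs G) (a := (k, i)) ?_)
        (X_mem_vertexPrime_iff.2 (Or.inr (Or.inl ⟨rfl, hkA⟩)))
      exact mem_filter.2 ⟨mem_univ _, hik.symm, hlt⟩
    · refine Ideal.mem_of_dvd _ (dvd_prod_of_mem _ (s := edgePairs G) (a := (i, k)) ?_)
        (X_mem_vertexPrime_iff.2 (Or.inr (Or.inr ⟨rfl, hik, hkA⟩)))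
      exact mem_filter.2 ⟨mem_univ _, hik, hlt⟩

lemma chosenNeighbors_subset (p : Ideal (MvPolynomial (Fin n × Fin n) K)) (i : Fin n) :
    chosenNeighbors G p i ⊆ G.neighborFinset i := by
  classical
  exact filter_subset _ _

lemma vertexPrime_chosenNeighbors_le {p : Ideal (MvPolynomial (Fin n × Fin n) K)}
    (hp : p.IsPrime) (hdiag : diagIdeal K n G ≤ p) {i : Fin n} (hi : X (i, i) ∈ p) :
    vertexPrime G K i (chosenNeighbors G p i) ≤ p := by
  have hprod : ∀ k, G.Adj i k → X (i, k) * X (k, i) ∈ p := fun k hk => by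
    rcases lt_or_gt_of_ne hk.ne with hlt | hlt
    · exact (diagMinor_mem_iff_left hi).1 (hdiag (Ideal.subset_span ⟨i, k, hk, hlt, rfl⟩))
    · exact (diagMinor_mem_iff_right hi).1
        (hdiag (Ideal.subset_span ⟨k, i, hk.symm, hlt, rfl⟩))
  refine sup_le ?_ ?_
  · rw [Ideal.span_le]
    rintro _ ⟨⟨a, k⟩, hq, rfl⟩
    rcases hq with hq | ⟨rfl, hk⟩ | ⟨rfl, hadj, hk⟩
    · rwa [hq]
    · simp only [chosenNeighbors, mem_filter, G.mem_neighborFinset] at hk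
      obtain ⟨hadj, hk⟩ := hk
      split_ifs at hk
      exacts [(hp.mem_or_mem (hprod k hadj)).resolve_right hk, hk]
    · simp only [chosenNeighbors, mem_filter, G.mem_neighborFinset, hadj, true_and] at hk
      split_ifs at hk
      exacts [not_not.1 hk, (hp.mem_or_mem (hprod a hadj)).resolve_left hk]
  · rw [diagIdeal_eq_minorIdeal] at hdiag
    exact (Ideal.span_mono (Set.image_mono (filter_subset _ _))).trans hdiag

lemma exists_vertexPrime_le {p : Ideal (MvPolynomial (Fin n × Fin n) K)} (hp : p.IsPrime)
    (hQ : diagIdeal K n G ⊔ Ideal.span {edgeProduct G K} ≤ p) :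
    ∃ i A, A ⊆ G.neighborFinset i ∧ A ≠ upperNeighbors G i ∧
      vertexPrime G K i A ≤ p := by
  have hdiag : diagIdeal K n G ≤ p := le_sup_left.trans hQ
  obtain ⟨⟨a, b⟩, hab, hba⟩ :=
    hp.prod_mem_iff.1 (hQ (Ideal.mem_sup_right (Ideal.mem_span_singleton_self _)))
  obtain ⟨-, hadj, hlt⟩ := mem_filter.1 hab
  have hdiagProd : X (a, a) * X (b, b) ∈ p :=
    (Submodule.sub_mem_iff_left _ (Ideal.mul_mem_left _ _ hba)).1
      (hdiag (Ideal.subset_span ⟨a, b, hadj, hlt, rfl⟩))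
  rcases hp.mem_or_mem hdiagProd with ha | hb
  · refine ⟨a, _, chosenNeighbors_subset p a, fun h => ?_,
      vertexPrime_chosenNeighbors_le hp hdiag ha⟩
    have hbUpper : b ∈ upperNeighbors G a :=
      mem_filter.2 ⟨(G.mem_neighborFinset _ _).2 hadj, hlt⟩
    simp [← h, chosenNeighbors, hlt, hba] at hbUpper
  · refine ⟨b, _, chosenNeighbors_subset p b, fun h => ?_,
      vertexPrime_chosenNeighbors_le hp hdiag hb⟩
    have haChosen : a ∈ chosenNeighbors G p b := by
      simp [chosenNeighbors, hadj.symm, not_lt.2 hlt.le, hba]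
    simp [h, upperNeighbors, not_lt.2 hlt.le] at haChosen

lemma mem_vertexIndex {z : Σ _ : Fin n, Finset (Fin n)} :
    z ∈ vertexIndex G ↔ z.2 ⊆ G.neighborFinset z.1 ∧ z.2 ≠ upperNeighbors G z.1 := by
  simp [vertexIndex, and_comm]

lemma card_vertexIndex : (vertexIndex G).card = ∑ i, (2 ^ G.degree i - 1) := by
  refine (card_sigma _ _).trans (sum_congr rfl fun i _ => ?_)
  have : upperNeighbors G i ⊆ G.neighborFinset i := filter_subset _ _
  rw [card_erase_of_mem (mem_powerset.2 this), card_powerset,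
    G.card_neighborFinset_eq_degree]

lemma eq_of_vertexPrime_le {z w : Σ _ : Fin n, Finset (Fin n)} (hz : z ∈ vertexIndex G)
    (hw : w ∈ vertexIndex G) (h : vertexPrime G K z.1 z.2 ≤ vertexPrime G K w.1 w.2) :
    z = w := by
  obtain ⟨i, A⟩ := z
  obtain ⟨j, B⟩ := w
  obtain ⟨rfl, rfl⟩ := eq_of_vertexVars_subset (mem_vertexIndex.1 hz).1 (mem_vertexIndex.1 hw).1
    fun _ hp => X_mem_vertexPrime_iff.1 (h (X_mem_vertexPrime_iff.2 hp))
  rfl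

lemma vertexPrime_injOn :
    Set.InjOn (fun z : Σ _ : Fin n, Finset (Fin n) => vertexPrime G K z.1 z.2) (vertexIndex G) :=
  fun _ hz _ hw h => eq_of_vertexPrime_le hz hw h.le

lemma minimalPrimes_diagIdeal_sup_edgeProduct :
    (diagIdeal K n G ⊔ Ideal.span {edgeProduct G K}).minimalPrimes =
      (fun z : Σ _ : Fin n, Finset (Fin n) => vertexPrime G K z.1 z.2) '' vertexIndex G := by
  refine Ideal.minimalPrimes_eq_image _ (fun z _ => vertexPrime_isPrime z.1 z.2)
    (fun z hz => diagIdeal_sup_le_vertexPrime (mem_vertexIndex.1 hz).1 (mem_vertexIndex.1 hz).2)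
    (fun q hq hQq => ?_) (fun _ hz _ hw => eq_of_vertexPrime_le hz hw)
  obtain ⟨i, A, hA, hgood, hle⟩ := exists_vertexPrime_le hq hQq
  exact ⟨⟨i, A⟩, mem_vertexIndex.2 ⟨hA, hgood⟩, hle⟩

end Graph

end

theorem stmt16_general (K : Type*) [Field K] (n : ℕ) (G : SimpleGraph (Fin n))
    [DecidableRel G.Adj] :
    ((Ideal.span {Ideal.Quotient.mk (diagIdeal K n G)
          (∏ p ∈ Finset.univ.filter
              (fun p : Fin n × Fin n => G.Adj p.1 p.2 ∧ p.1 < p.2),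
            X (p.2, p.1))}).minimalPrimes.ncard : ℤ) =
      (∑ i : Fin n, (2 : ℤ) ^ G.degree i) - n := by
  rw [Ideal.ncard_minimalPrimes_span_singleton_mk]
  change ((diagIdeal K n G ⊔ Ideal.span {edgeProduct G K}).minimalPrimes.ncard : ℤ) = _
  rw [minimalPrimes_diagIdeal_sup_edgeProduct, vertexPrime_injOn.ncard_image,
    Set.ncard_coe_finset, card_vertexIndex]
  push_cast [Nat.cast_sub Nat.one_le_two_pow]
  simp [sum_sub_distrib]

theorem stmt16 (K : Type*) [Field K] (n : ℕ) (G : SimpleGraph (Fin n))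
    [DecidableRel G.Adj] (hiso : ∀ v : Fin n, 0 < G.degree v) :
    ((Ideal.span {Ideal.Quotient.mk (diagIdeal K n G)
          (∏ p ∈ Finset.univ.filter
              (fun p : Fin n × Fin n => G.Adj p.1 p.2 ∧ p.1 < p.2),
            X (p.2, p.1))}).minimalPrimes.ncard : ℤ) =
      (∑ i : Fin n, (2 : ℤ) ^ G.degree i) - n :=
  stmt16_general K n G
end

section
/- If G is a simple connected graph with m ≥ 2 edges and no vertex of degree m, then ∑_{i ∈ V(G)} (2^{deg(i)} − 1) − m < 2^m − 1. -/
open Finset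

theorem stmt19 {V : Type*} [Fintype V] [DecidableEq V] (G : SimpleGraph V)
    [DecidableRel G.Adj] (m : ℕ) (hm : G.edgeFinset.card = m)
    (hconn : G.Connected) (hm2 : 2 ≤ m) (hdeg : ∀ v : V, G.degree v ≠ m) :
    (∑ i : V, ((2 : ℤ) ^ G.degree i - 1)) - m < 2 ^ m - 1 := by
  classical
  set E := G.edgeFinset with hE
  have hinc : ∀ v : V, G.incidenceFinset v ⊆ E := by
    intro v e he
    rw [SimpleGraph.mem_incidenceFinset] at he
    exact SimpleGraph.mem_edgeFinset.2 he.1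
  -- key: ∑ 2^{deg v} counted as ∑ over subsets S of E of #{v : S ⊆ inc v}
  have hswap : ∑ v : V, 2 ^ G.degree v
      = ∑ S ∈ E.powerset, #{v : V | S ⊆ G.incidenceFinset v} := by
    have h1 : ∀ v : V, (2 : ℕ) ^ G.degree v
        = ∑ S ∈ E.powerset, if S ⊆ G.incidenceFinset v then 1 else 0 := by
      intro v
      rw [← Finset.card_filter]
      have h2 : {S ∈ E.powerset | S ⊆ G.incidenceFinset v}
          = (G.incidenceFinset v).powerset := by
        ext S
        simp only [Finset.mem_filter, Finset.mem_powerset]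
        exact ⟨fun h => h.2, fun h => ⟨h.trans (hinc v), h⟩⟩
      rw [h2, Finset.card_powerset, G.card_incidenceFinset_eq_degree v]
    simp_rw [h1]
    rw [Finset.sum_comm]
    congr 1
    ext S
    rw [← Finset.card_filter]
  -- bound the count for each S
  have hbound2 : ∀ S : Finset (Sym2 V), S.Nonempty →
      #{v : V | S ⊆ G.incidenceFinset v} ≤ 2 := by
    intro S ⟨e, heS⟩
    induction e with
    | h a b =>
      refine le_trans (Finset.card_le_card (fun v hv => ?_))
        ((Finset.card_insert_le a {b}).trans (by simp))
      simp only [Finset.mem_filter, Finset.mem_univ, true_and] at hv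
      have hme := hv heS
      rw [SimpleGraph.mem_incidenceFinset] at hme
      have hv2 : v ∈ s(a, b) := hme.2
      rw [Sym2.mem_iff] at hv2
      rcases hv2 with h | h <;> simp [h]
  have hbound1 : ∀ S : Finset (Sym2 V), 2 ≤ S.card →
      #{v : V | S ⊆ G.incidenceFinset v} ≤ 1 := by
    intro S hS
    rw [Finset.card_le_one]
    intro v hv w hw
    obtain ⟨e1, he1, e2, he2, hne⟩ := Finset.one_lt_card.1 hS
    simp only [Finset.mem_filter, Finset.mem_univ, true_and] at hv hw
    by_contra hvw
    have h1v := hv he1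
    have h1w := hw he1
    have h2v := hv he2
    have h2w := hw he2
    rw [SimpleGraph.mem_incidenceFinset] at h1v h1w h2v h2w
    have e1eq : e1 = s(v, w) := (Sym2.mem_and_mem_iff hvw).1 ⟨h1v.2, h1w.2⟩
    have e2eq : e2 = s(v, w) := (Sym2.mem_and_mem_iff hvw).1 ⟨h2v.2, h2w.2⟩
    exact hne (e1eq.trans e2eq.symm)
  have hboundE : #{v : V | E ⊆ G.incidenceFinset v} = 0 := by
    rw [Finset.card_eq_zero]
    ext v
    simp only [Finset.mem_filter, Finset.mem_univ, true_and, Finset.notMem_empty, iff_false]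
    intro hsub
    have heq : G.incidenceFinset v = E := Finset.Subset.antisymm (hinc v) hsub
    exact hdeg v (by rw [← G.card_incidenceFinset_eq_degree v, heq, hm])
  -- now sum over powerset
  have hEmem : E ∈ E.powerset := Finset.mem_powerset_self E
  have hemptymem : (∅ : Finset (Sym2 V)) ∈ E.powerset := Finset.empty_mem_powerset E
  have hEne : E ≠ ∅ := by
    intro h
    rw [h] at hm
    simp at hm; omega
  have hEmem' : E ∈ E.powerset.erase ∅ := Finset.mem_erase.2 ⟨hEne, hEmem⟩
  set P2 := (E.powerset.erase ∅).erase E with hP2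
  have hsplit : ∑ S ∈ E.powerset, #{v : V | S ⊆ G.incidenceFinset v}
      = #{v : V | (∅ : Finset (Sym2 V)) ⊆ G.incidenceFinset v}
        + (#{v : V | E ⊆ G.incidenceFinset v}
        + ∑ S ∈ P2, #{v : V | S ⊆ G.incidenceFinset v}) := by
    rw [← Finset.add_sum_erase _ _ hemptymem, ← Finset.add_sum_erase _ _ hEmem']
  have hcardempty : #{v : V | (∅ : Finset (Sym2 V)) ⊆ G.incidenceFinset v}
      = Fintype.card V := by
    rw [Finset.filter_true_of_mem (fun v _ => Finset.empty_subset _), Finset.card_univ]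
  have hsum2 : ∑ S ∈ P2, #{v : V | S ⊆ G.incidenceFinset v}
      ≤ ∑ S ∈ P2, (1 + if S.card = 1 then 1 else 0) := by
    apply Finset.sum_le_sum
    intro S hS
    have hS' := hS
    rw [hP2, Finset.mem_erase, Finset.mem_erase] at hS'
    obtain ⟨hSne_E, hSne0, _⟩ := hS'
    by_cases h1 : S.card = 1
    · have hne : S.Nonempty := Finset.card_pos.1 (by omega)
      simpa [h1] using hbound2 S hne
    · have hc : 2 ≤ S.card := by
        have : S.card ≠ 0 := fun h => hSne0 (Finset.card_eq_zero.1 h)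
        omega
      simpa [h1] using hbound1 S hc
  have hcardP2 : P2.card = 2 ^ m - 2 := by
    rw [hP2, Finset.card_erase_of_mem hEmem', Finset.card_erase_of_mem hemptymem,
      Finset.card_powerset, hm, Nat.sub_sub]
  have hfilter1 : {S ∈ P2 | S.card = 1} = Finset.powersetCard 1 E := by
    ext S
    simp only [Finset.mem_filter, hP2, Finset.mem_erase, Finset.mem_powerset,
      Finset.mem_powersetCard]
    constructor
    · rintro ⟨⟨_, _, hsub⟩, hc⟩; exact ⟨hsub, hc⟩
    · rintro ⟨hsub, hc⟩
      refine ⟨⟨?_, ?_, hsub⟩, hc⟩ <;>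
      · intro h
        subst h
        first
        | simp at hc
        | (rw [hm] at hc; omega)
  have hsum2' : ∑ S ∈ P2, (1 + if S.card = 1 then 1 else 0)
      = (2 ^ m - 2) + m := by
    rw [Finset.sum_add_distrib, Finset.sum_const, ← Finset.card_filter,
      hfilter1, hcardP2]
    simp [Finset.card_powersetCard, hm, Nat.choose_one_right]
  -- combine
  have hmain : ∑ v : V, 2 ^ G.degree v ≤ Fintype.card V + (2 ^ m - 2) + m := by
    rw [hswap, hsplit, hcardempty, hboundE]
    have := le_trans hsum2 (le_of_eq hsum2')
    omega
  -- cast to ℤ and finish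
  have h4 : (4 : ℕ) ≤ 2 ^ m := by
    calc (4 : ℕ) = 2 ^ 2 := by norm_num
    _ ≤ 2 ^ m := Nat.pow_le_pow_right (by norm_num) hm2
  have hmainZ : (∑ v : V, (2 : ℤ) ^ G.degree v)
      ≤ (Fintype.card V : ℤ) + (2 ^ m - 2) + m := by
    have hcast : ((∑ v : V, 2 ^ G.degree v : ℕ) : ℤ)
        ≤ ((Fintype.card V + (2 ^ m - 2) + m : ℕ) : ℤ) := Nat.cast_le.2 hmain
    push_cast [Nat.cast_sub (by omega : 2 ≤ 2 ^ m)] at hcast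
    convert hcast using 2 <;> push_cast <;> ring
  have hsum_split : ∑ i : V, ((2 : ℤ) ^ G.degree i - 1)
      = (∑ v : V, (2 : ℤ) ^ G.degree v) - Fintype.card V := by
    rw [Finset.sum_sub_distrib, Finset.sum_const, Finset.card_univ]
    simp
  rw [hsum_split]
  linarith
end
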